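/- arXiv:math/0501396 — 8 statements merged into one kernel-verified Lean document; each statement's English description precedes it below -/
import Mathlib

section
/- Let V be a 2n-dimensional real vector space and let {Q_i = e_i + η_i}, i = 1,...,4n (with e_i ∈ V and η_i ∈ V*), be an orthonormal basis of V ⊕ V* endowed with its natural neutral metric, i.e. ⟨Q_i,Q_j⟩ = 0 for i ≠ j, ‖Q_i‖² = 1 for 1 ≤ i ≤ 2n and ‖Q_i‖² = −1 for 2n+1 ≤ i ≤ 4n. Then e_1,...,e_{2n} is a basis of V and η_1,...,η_{2n} is a basis of V*; similarly, e_{2n+1},...,e_{4n} is a basis of V and η_{2n+1},...,η_{4n} is a basis of V*. -/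
/-- The natural neutral metric on `V ⊕ V*`:
`⟨X+ξ, Y+η⟩ = ½(ξ(Y) + η(X))`. -/
noncomputable def neutralForm {V : Type*} [AddCommGroup V] [Module ℝ V]
    (p q : V × Module.Dual ℝ V) : ℝ :=
  (p.2 q.1 + q.2 p.1) / 2


private lemma neutral_key {V : Type*} [AddCommGroup V] [Module ℝ V] {m : ℕ}
    (R : Fin m → V × Module.Dual ℝ V)
    (horth : ∀ i j, i ≠ j → neutralForm (R i) (R j) = 0)
    (ε : ℝ) (hε : ε ≠ 0)
    (hnorm : ∀ i, neutralForm (R i) (R i) = ε) :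
    LinearIndependent ℝ (fun i => (R i).1) ∧ LinearIndependent ℝ (fun i => (R i).2) := by
  have main : ∀ c : Fin m → ℝ,
      (∑ j, c j • (R j).1 = 0 ∨ ∑ j, c j • (R j).2 = 0) → ∀ i, c i = 0 := by
    intro c hc
    have hT1 : ∑ i, ∑ j, c i * c j * neutralForm (R i) (R j) = ε * ∑ i, c i ^ 2 := by
      rw [Finset.mul_sum]
      refine Finset.sum_congr rfl fun i _ => ?_
      rw [Finset.sum_eq_single i]
      · rw [hnorm i]; ring
      · intro j _ hj; rw [horth i j (Ne.symm hj)]; ring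
      · intro h; exact absurd (Finset.mem_univ i) h
    have hA : (∑ i, ∑ j, c i * c j * ((R i).2 (R j).1)) = 0 := by
      rcases hc with hc | hc
      · have : ∀ i, ∑ j, c i * c j * ((R i).2 (R j).1)
            = c i * (R i).2 (∑ j, c j • (R j).1) := by
          intro i
          rw [map_sum, Finset.mul_sum]
          refine Finset.sum_congr rfl fun j _ => ?_
          rw [map_smul, smul_eq_mul]; ring
        simp [this, hc]
      · rw [Finset.sum_comm]
        have : ∀ j, ∑ i, c i * c j * ((R i).2 (R j).1)
            = c j * (∑ i, c i • (R i).2) (R j).1 := by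
          intro j
          rw [LinearMap.sum_apply, Finset.mul_sum]
          refine Finset.sum_congr rfl fun i _ => ?_
          rw [LinearMap.smul_apply, smul_eq_mul]; ring
        simp [this, hc]
    have hT2 : ∑ i, ∑ j, c i * c j * neutralForm (R i) (R j) = 0 := by
      have expand : ∀ i j : Fin m, c i * c j * neutralForm (R i) (R j)
          = (c i * c j * ((R i).2 (R j).1)) / 2 + (c j * c i * ((R j).2 (R i).1)) / 2 := by
        intro i j; unfold neutralForm; ring
      calc ∑ i, ∑ j, c i * c j * neutralForm (R i) (R j)
          = (∑ i, ∑ j, (c i * c j * ((R i).2 (R j).1)) / 2)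
            + ∑ i, ∑ j, (c j * c i * ((R j).2 (R i).1)) / 2 := by
            rw [← Finset.sum_add_distrib]
            refine Finset.sum_congr rfl fun i _ => ?_
            rw [← Finset.sum_add_distrib]
            exact Finset.sum_congr rfl fun j _ => expand i j
        _ = (∑ i, ∑ j, (c i * c j * ((R i).2 (R j).1)) / 2)
            + ∑ j, ∑ i, (c j * c i * ((R j).2 (R i).1)) / 2 := by rw [Finset.sum_comm]
        _ = (∑ i, ∑ j, c i * c j * ((R i).2 (R j).1)) / 2
            + (∑ i, ∑ j, c i * c j * ((R i).2 (R j).1)) / 2 := by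
            simp [Finset.sum_div]
        _ = 0 := by rw [hA]; ring
    have hsum : ∑ i, c i ^ 2 = 0 := by
      have := hT1.symm.trans hT2
      exact (mul_eq_zero.mp this).resolve_left hε
    intro i
    have h0 : ∀ j ∈ Finset.univ, (0:ℝ) ≤ c j ^ 2 := fun j _ => sq_nonneg _
    have := (Finset.sum_eq_zero_iff_of_nonneg h0).mp hsum i (Finset.mem_univ i)
    exact pow_eq_zero_iff (by norm_num) |>.mp this
  constructor
  · rw [Fintype.linearIndependent_iff]
    intro c hc; exact main c (Or.inl hc)
  · rw [Fintype.linearIndependent_iff]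
    intro c hc; exact main c (Or.inr hc)

theorem stmt0 {V : Type*} [AddCommGroup V] [Module ℝ V] [FiniteDimensional ℝ V]
    (n : ℕ) (hdim : Module.finrank ℝ V = 2 * n)
    (Q : Fin (4 * n) → V × Module.Dual ℝ V)
    (horth : ∀ i j, i ≠ j → neutralForm (Q i) (Q j) = 0)
    (hnorm : ∀ i : Fin (4 * n),
      neutralForm (Q i) (Q i) = if (i : ℕ) < 2 * n then 1 else -1) :
    (LinearIndependent ℝ (fun i : Fin (2 * n) =>
        (Q ⟨(i : ℕ), by have := i.isLt; omega⟩).1) ∧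
      Submodule.span ℝ (Set.range (fun i : Fin (2 * n) =>
        (Q ⟨(i : ℕ), by have := i.isLt; omega⟩).1)) = ⊤) ∧
    (LinearIndependent ℝ (fun i : Fin (2 * n) =>
        (Q ⟨(i : ℕ), by have := i.isLt; omega⟩).2) ∧
      Submodule.span ℝ (Set.range (fun i : Fin (2 * n) =>
        (Q ⟨(i : ℕ), by have := i.isLt; omega⟩).2)) = ⊤) ∧
    (LinearIndependent ℝ (fun i : Fin (2 * n) =>
        (Q ⟨2 * n + (i : ℕ), by have := i.isLt; omega⟩).1) ∧
      Submodule.span ℝ (Set.range (fun i : Fin (2 * n) =>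
        (Q ⟨2 * n + (i : ℕ), by have := i.isLt; omega⟩).1)) = ⊤) ∧
    (LinearIndependent ℝ (fun i : Fin (2 * n) =>
        (Q ⟨2 * n + (i : ℕ), by have := i.isLt; omega⟩).2) ∧
      Submodule.span ℝ (Set.range (fun i : Fin (2 * n) =>
        (Q ⟨2 * n + (i : ℕ), by have := i.isLt; omega⟩).2)) = ⊤) := by
  have hdual : Module.finrank ℝ (Module.Dual ℝ V) = 2 * n := by
    rw [Subspace.dual_finrank_eq, hdim]
  have hcard : Fintype.card (Fin (2 * n)) = 2 * n := Fintype.card_fin _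
  -- first block
  have h1 := neutral_key (fun i : Fin (2 * n) => Q ⟨(i : ℕ), by have := i.isLt; omega⟩)
    (fun i j hij => horth _ _ (by simpa [Fin.ext_iff] using fun h => hij (Fin.ext h)))
    1 one_ne_zero
    (fun i => by rw [hnorm]; simp [i.isLt])
  have h2 := neutral_key (fun i : Fin (2 * n) => Q ⟨2 * n + (i : ℕ), by have := i.isLt; omega⟩)
    (fun i j hij => horth _ _ (by simpa [Fin.ext_iff] using fun h => hij (Fin.ext (by omega))))
    (-1) (by norm_num)
    (fun i => by rw [hnorm]; simp)
  refine ⟨⟨h1.1, h1.1.span_eq_top_of_card_eq_finrank' (by rw [hcard, hdim])⟩,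
    ⟨h1.2, h1.2.span_eq_top_of_card_eq_finrank' (by rw [hcard, hdual])⟩,
    ⟨h2.1, h2.1.span_eq_top_of_card_eq_finrank' (by rw [hcard, hdim])⟩,
    ⟨h2.2, h2.2.span_eq_top_of_card_eq_finrank' (by rw [hcard, hdual])⟩⟩
end

section
/- Let V be a 2-dimensional real vector space and let {Q_i = e_i + η_i}, 1 ≤ i ≤ 4 (with e_i ∈ V, η_i ∈ V*), be an orthonormal basis of V ⊕ V* endowed with its natural neutral metric (so ‖Q_1‖² = ‖Q_2‖² = 1, ‖Q_3‖² = ‖Q_4‖² = −1 and the Q_i are pairwise orthogonal). Write e_3 = a_{11}e_1 + a_{12}e_2 and e_4 = a_{21}e_1 + a_{22}e_2 (this is possible since e_1, e_2 form a basis of V). Then the 2×2 matrix A = [a_{kl}] is orthogonal. -/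
open Matrix

theorem stmt2 {V : Type*} [AddCommGroup V] [Module ℝ V] [FiniteDimensional ℝ V]
    (hdim : Module.finrank ℝ V = 2)
    (Q : Fin 4 → V × Module.Dual ℝ V)
    (horth : ∀ i j, i ≠ j → neutralForm (Q i) (Q j) = 0)
    (hnorm : ∀ i : Fin 4, neutralForm (Q i) (Q i) = if (i : ℕ) < 2 then 1 else -1)
    (A : Matrix (Fin 2) (Fin 2) ℝ)
    (h3 : (Q 2).1 = A 0 0 • (Q 0).1 + A 0 1 • (Q 1).1)
    (h4 : (Q 3).1 = A 1 0 • (Q 0).1 + A 1 1 • (Q 1).1) :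
    A * Aᵀ = 1 := by
  -- scalar abbreviations
  set f : Fin 4 → Fin 4 → ℝ := fun i j => (Q i).2 (Q j).1 with hf
  have exp2 : ∀ i : Fin 4, f i 2 = A 0 0 * f i 0 + A 0 1 * f i 1 := by
    intro i; simp only [hf, h3, map_add, _root_.map_smul, smul_eq_mul]
  have exp3 : ∀ i : Fin 4, f i 3 = A 1 0 * f i 0 + A 1 1 * f i 1 := by
    intro i; simp only [hf, h4, map_add, _root_.map_smul, smul_eq_mul]
  have ho : ∀ i j, i ≠ j → f i j + f j i = 0 := by
    intro i j hij
    have := horth i j hij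
    unfold neutralForm at this
    simp only [hf]
    linarith
  have hn : ∀ i : Fin 4, f i i = if (i : ℕ) < 2 then 1 else -1 := by
    intro i
    have := hnorm i
    unfold neutralForm at this
    simp only [hf]
    by_cases hi : (i:ℕ) < 2 <;> simp only [hi, if_true, if_false] at this ⊢ <;> linarith
  have n0 := hn 0; have n1 := hn 1; have n2 := hn 2; have n3 := hn 3
  simp only [Fin.isValue, show ((0:Fin 4):ℕ) = 0 from rfl, show ((1:Fin 4):ℕ) = 1 from rfl,
    show ((2:Fin 4):ℕ) = 2 from rfl, show ((3:Fin 4):ℕ) = 3 from rfl] at n0 n1 n2 n3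
  norm_num at n0 n1 n2 n3
  have o01 := ho 0 1 (by decide)
  have o02 := ho 0 2 (by decide)
  have o03 := ho 0 3 (by decide)
  have o12 := ho 1 2 (by decide)
  have o13 := ho 1 3 (by decide)
  have o23 := ho 2 3 (by decide)
  rw [exp2 0] at o02
  rw [exp2 1] at o12
  rw [exp3 0] at o03
  rw [exp3 1] at o13
  rw [exp3 2, exp2 3] at o23
  rw [exp2 2] at n2
  rw [exp3 3] at n3
  ext i j
  fin_cases i <;> fin_cases j <;>
    simp [Matrix.mul_apply, Fin.sum_univ_two, Matrix.one_apply, Matrix.transpose_apply]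
  · linear_combination A 0 0 * o02 + A 0 1 * o12 - n2 - A 0 0 * A 0 1 * o01 - A 0 0 * A 0 0 * n0 - A 0 1 * A 0 1 * n1
  · linear_combination (A 1 0 * o02 + A 1 1 * o12 + A 0 0 * o03 + A 0 1 * o13 - o23 - (A 1 0 * A 0 1 + A 0 0 * A 1 1) * o01 - 2 * A 0 0 * A 1 0 * n0 - 2 * A 0 1 * A 1 1 * n1) / 2
  · linear_combination (A 1 0 * o02 + A 1 1 * o12 + A 0 0 * o03 + A 0 1 * o13 - o23 - (A 1 0 * A 0 1 + A 0 0 * A 1 1) * o01 - 2 * A 0 0 * A 1 0 * n0 - 2 * A 0 1 * A 1 1 * n1) / 2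
  · linear_combination A 1 0 * o03 + A 1 1 * o13 - n3 - A 1 0 * A 1 1 * o01 - A 1 0 * A 1 0 * n0 - A 1 1 * A 1 1 * n1
end

section
/- Let W be a real vector space with a nondegenerate symmetric bilinear form g of signature (2k, 2l), and let J be a complex structure on W compatible with g (i.e. J² = −Id and J is g-skew-symmetric). Then there exists an orthonormal basis {e_1,...,e_{2k+2l}} of W (with ‖e_1‖² = ... = ‖e_{2k}‖² = 1 and ‖e_{2k+1}‖² = ... = ‖e_{2k+2l}‖² = −1) such that e_{2i} = J e_{2i−1} for i = 1,...,k+l. -/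
/-!
For `x` with `g x x = ±1`, compatibility gives `g (J x) (J x) = g x x` and `g x (J x) = 0`, so
`x, J x` is an orthonormal pair of equal signs. Given finitely many vectors `vᵢ` whose pairs
`vᵢ, J vᵢ` are jointly orthonormal, the common `g`-orthogonal complement `S` of these pairs is
nonzero as long as they do not fill `W`; projecting onto `S` shows that `g` does not vanish on
`S × S`, so by polarization `S` contains a vector of nonzero norm, which after rescaling extends
the family. This yields a basis of `W` of the form `vᵢ, J vᵢ`. By Sylvester's law of inertia
exactly `k` of the `vᵢ` have norm `1`, and listing those first gives the required basis.
-/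

open Module Submodule Finset

namespace LinearMap.IsOrthoᵢ

variable {ι R K M : Type*} [Fintype ι] [AddCommGroup M]

theorem apply_sum_smul_self [CommRing R] [Module R M] {B : M →ₗ[R] M →ₗ[R] R} {v : ι → M}
    (hv : B.IsOrthoᵢ v) (a : ι → R) :
    B (∑ i, a i • v i) (∑ i, a i • v i) = ∑ i, a i * a i * B (v i) (v i) := by
  simp only [map_sum, map_smul, LinearMap.sum_apply, LinearMap.smul_apply, smul_eq_mul]
  refine Finset.sum_congr rfl fun i _ => ?_
  rw [Finset.sum_eq_single i (fun j _ hji => by rw [hv hji, mul_zero]) (by simp)]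
  ring

theorem apply_sub_sum_div_smul [Field K] [Module K M] {B : M →ₗ[K] M →ₗ[K] K} {v : ι → M}
    (hv : B.IsOrthoᵢ v) (hv₀ : ∀ i, B (v i) (v i) ≠ 0) (y : M) (j : ι) :
    B (v j) (y - ∑ i, (B (v i) y / B (v i) (v i)) • v i) = 0 := by
  simp only [map_sub, map_sum, map_smul, smul_eq_mul]
  rw [Finset.sum_eq_single j (fun i _ hij => by rw [hv hij.symm, mul_zero]) (by simp),
    div_mul_cancel₀ _ (hv₀ j), sub_self]

variable [Module ℝ M] {B : M →ₗ[ℝ] M →ₗ[ℝ] ℝ} {v : ι → M}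

theorem apply_self_pos_of_mem_span (hv : B.IsOrthoᵢ v) (hpos : ∀ i, 0 < B (v i) (v i))
    {x : M} (hx : x ∈ span ℝ (Set.range v)) (hx₀ : x ≠ 0) : 0 < B x x := by
  obtain ⟨a, rfl⟩ := (mem_span_range_iff_exists_fun ℝ).mp hx
  obtain ⟨i, hi⟩ : ∃ i, a i ≠ 0 := by
    by_contra! h
    exact hx₀ (by simp [h])
  rw [hv.apply_sum_smul_self]
  exact Finset.sum_pos' (fun j _ => mul_nonneg (mul_self_nonneg _) (hpos j).le)
    ⟨i, mem_univ i, mul_pos (mul_self_pos.mpr hi) (hpos i)⟩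

theorem apply_self_nonpos_of_mem_span (hv : B.IsOrthoᵢ v) (hnonpos : ∀ i, B (v i) (v i) ≤ 0)
    {x : M} (hx : x ∈ span ℝ (Set.range v)) : B x x ≤ 0 := by
  obtain ⟨a, rfl⟩ := (mem_span_range_iff_exists_fun ℝ).mp hx
  rw [hv.apply_sum_smul_self]
  exact Finset.sum_nonpos fun i _ =>
    mul_nonpos_of_nonneg_of_nonpos (mul_self_nonneg _) (hnonpos i)

end LinearMap.IsOrthoᵢ

section Sylvester

variable {ι ι' M : Type*} [Fintype ι] [Fintype ι'] [AddCommGroup M] [Module ℝ M]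
  {B : M →ₗ[ℝ] M →ₗ[ℝ] ℝ}

theorem card_pos_le_of_isOrthoᵢ (e : Basis ι ℝ M) (e' : Basis ι' ℝ M) (he : B.IsOrthoᵢ e)
    (he' : B.IsOrthoᵢ e') :
    #{i | 0 < B (e i) (e i)} ≤ #{j | 0 < B (e' j) (e' j)} := by
  have := Module.Finite.of_basis e
  let P := {i // 0 < B (e i) (e i)}
  let N := {j // ¬ 0 < B (e' j) (e' j)}
  let U := span ℝ (Set.range (e ∘ Subtype.val : P → M))
  let V := span ℝ (Set.range (e' ∘ Subtype.val : N → M))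
  have hUV : Disjoint U V := by
    refine disjoint_def.mpr fun x hxU hxV => by_contra fun hx₀ => ?_
    have hP : B.IsOrthoᵢ (e ∘ Subtype.val : P → M) :=
      he.comp_of_injective Subtype.val_injective
    have hN : B.IsOrthoᵢ (e' ∘ Subtype.val : N → M) :=
      he'.comp_of_injective Subtype.val_injective
    exact (hP.apply_self_pos_of_mem_span (fun i => i.2) hxU hx₀).not_ge
      (hN.apply_self_nonpos_of_mem_span (fun j => not_lt.mp j.2) hxV)
  have hU : finrank ℝ U = #{i | 0 < B (e i) (e i)} :=
    (finrank_span_eq_card (e.linearIndependent.comp _ Subtype.val_injective)).trans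
      (Fintype.card_subtype _)
  have hV : finrank ℝ V = Fintype.card ι' - #{j | 0 < B (e' j) (e' j)} :=
    (finrank_span_eq_card (e'.linearIndependent.comp _ Subtype.val_injective)).trans
      ((Fintype.card_subtype_compl _).trans (by rw [Fintype.card_subtype]))
  have hle := finrank_add_finrank_le_of_disjoint hUV
  rw [hU, hV, finrank_eq_card_basis e'] at hle
  have := card_le_univ (s := {j | 0 < B (e' j) (e' j)})
  omega

theorem card_pos_eq_of_isOrthoᵢ (e : Basis ι ℝ M) (e' : Basis ι' ℝ M) (he : B.IsOrthoᵢ e)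
    (he' : B.IsOrthoᵢ e') :
    #{i | 0 < B (e i) (e i)} = #{j | 0 < B (e' j) (e' j)} :=
  (card_pos_le_of_isOrthoᵢ e e' he he').antisymm (card_pos_le_of_isOrthoᵢ e' e he' he)

end Sylvester

theorem Equiv.exists_perm_iff_of_card_subtype_eq {α : Type*} [Fintype α] (p q : α → Prop)
    [DecidablePred p] [DecidablePred q]
    (h : Fintype.card {a // p a} = Fintype.card {a // q a}) :
    ∃ σ : Perm α, ∀ a, q (σ a) ↔ p a := by
  have hc : Fintype.card {a // ¬p a} = Fintype.card {a // ¬q a} := by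
    rw [Fintype.card_subtype_compl, Fintype.card_subtype_compl, h]
  refine ⟨subtypeCongr (Fintype.equivOfCardEq h) (Fintype.equivOfCardEq hc), fun a => ?_⟩
  by_cases ha : p a
  · simpa [subtypeCongr, sumCompl_symm_apply_of_pos ha, ha] using
      (Fintype.equivOfCardEq h ⟨a, ha⟩).2
  · simpa [subtypeCongr, sumCompl_symm_apply_of_neg ha, ha] using
      (Fintype.equivOfCardEq hc ⟨a, ha⟩).2

section RealBilinear

variable {W : Type*} [AddCommGroup W] [Module ℝ W]

theorem exists_mem_apply_self_ne_zero {g : W →ₗ[ℝ] W →ₗ[ℝ] ℝ} (hsymm : ∀ v w, g v w = g w v)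
    {S : Submodule ℝ W} {x y : W} (hx : x ∈ S) (hy : y ∈ S) (hxy : g x y ≠ 0) :
    ∃ z ∈ S, g z z ≠ 0 := by
  by_contra! h
  have hpolar : g (x + y) (x + y) = g x x + 2 * g x y + g y y := by
    simp only [map_add, LinearMap.add_apply, hsymm y x]
    ring
  rw [h _ (S.add_mem hx hy), h x hx, h y hy] at hpolar
  exact hxy (by linarith)

theorem exists_smul_apply_self_eq_one_or_neg_one {g : W →ₗ[ℝ] W →ₗ[ℝ] ℝ} {x : W}
    (hx : g x x ≠ 0) : ∃ c : ℝ, g (c • x) (c • x) = 1 ∨ g (c • x) (c • x) = -1 := by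
  have hs := Real.sq_sqrt (abs_nonneg (g x x))
  have hs₀ : Real.sqrt |g x x| ≠ 0 := by positivity
  refine ⟨(Real.sqrt |g x x|)⁻¹, ?_⟩
  simp only [map_smul, LinearMap.smul_apply, smul_eq_mul]
  rcases hx.lt_or_gt with hneg | hpos
  · right
    field_simp
    linarith [abs_of_neg hneg]
  · left
    field_simp
    linarith [abs_of_pos hpos]

theorem exists_ne_zero_forall_apply_eq_zero [FiniteDimensional ℝ W] {ι : Type*} [Fintype ι]
    (g : W →ₗ[ℝ] W →ₗ[ℝ] ℝ) (e : ι → W) (h : Fintype.card ι < finrank ℝ W) :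
    ∃ x ≠ 0, ∀ i, g (e i) x = 0 := by
  obtain ⟨x, hx, hx₀⟩ := exists_mem_ne_zero_of_ne_bot
    (LinearMap.ker_ne_bot_of_finrank_lt (f := LinearMap.pi fun i => g (e i)) (by simpa using h))
  exact ⟨x, hx₀, fun i => congr_fun (LinearMap.mem_ker.mp hx) i⟩

end RealBilinear

section ComplexStructure

variable {ι W : Type*} [AddCommGroup W] [Module ℝ W] {g : W →ₗ[ℝ] W →ₗ[ℝ] ℝ} {J : W →ₗ[ℝ] W}

theorem apply_map_map_of_skew (hJ : J ∘ₗ J = -LinearMap.id)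
    (hskew : ∀ v w, g (J v) w = -g v (J w)) (x y : W) : g (J x) (J y) = g x y := by
  rw [hskew, show J (J y) = -y from LinearMap.congr_fun hJ y, map_neg, neg_neg]

theorem apply_self_map_of_skew (hsymm : ∀ v w, g v w = g w v)
    (hskew : ∀ v w, g (J v) w = -g v (J w)) (x : W) : g x (J x) = 0 := by
  linarith [hskew x x, hsymm (J x) x]

/-- The vectors `v i` and `J (v i)` together form a `g`-orthonormal family
(`IsJOrthonormal.isOrthoᵢ_pairFamily`). -/
structure IsJOrthonormal (g : W →ₗ[ℝ] W →ₗ[ℝ] ℝ) (J : W →ₗ[ℝ] W) (v : ι → W) : Prop where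
  isOrthoᵢ : g.IsOrthoᵢ v
  apply_map : ∀ i j, g (v i) (J (v j)) = 0
  apply_self : ∀ i, g (v i) (v i) = 1 ∨ g (v i) (v i) = -1

def pairFamily (J : W →ₗ[ℝ] W) (v : ι → W) (p : ι × Fin 2) : W :=
  ![v p.1, J (v p.1)] p.2

theorem pairFamily_apply_self (hJ : J ∘ₗ J = -LinearMap.id)
    (hskew : ∀ v w, g (J v) w = -g v (J w)) (v : ι → W) (p : ι × Fin 2) :
    g (pairFamily J v p) (pairFamily J v p) = g (v p.1) (v p.1) := by
  obtain ⟨i, a⟩ := p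
  fin_cases a
  · rfl
  · exact apply_map_map_of_skew hJ hskew _ _

namespace IsJOrthonormal

variable {v : ι → W}

theorem apply_self_ne_zero (hv : IsJOrthonormal g J v) (i : ι) : g (v i) (v i) ≠ 0 := by
  rcases hv.apply_self i with h | h <;> simp [h]

theorem comp {κ : Type*} (hv : IsJOrthonormal g J v) {f : κ → ι}
    (hf : Function.Injective f) : IsJOrthonormal g J (v ∘ f) :=
  ⟨hv.isOrthoᵢ.comp_of_injective hf, fun i j => hv.apply_map (f i) (f j),
    fun i => hv.apply_self (f i)⟩

theorem isOrthoᵢ_pairFamily (hv : IsJOrthonormal g J v) (hJ : J ∘ₗ J = -LinearMap.id)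
    (hskew : ∀ v w, g (J v) w = -g v (J w)) : g.IsOrthoᵢ (pairFamily J v) := by
  rintro ⟨i, a⟩ ⟨j, b⟩ hne
  fin_cases a <;> fin_cases b <;> simp only [Function.onFun, pairFamily] <;> simp
  · exact hv.isOrthoᵢ fun h => hne (by simp [h])
  · exact hv.apply_map i j
  · rw [hskew, hv.apply_map, neg_zero]
  · rw [apply_map_map_of_skew hJ hskew]
    exact hv.isOrthoᵢ fun h => hne (by simp [h])

theorem linearIndependent_pairFamily (hv : IsJOrthonormal g J v)
    (hJ : J ∘ₗ J = -LinearMap.id) (hskew : ∀ v w, g (J v) w = -g v (J w)) :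
    LinearIndependent ℝ (pairFamily J v) :=
  LinearMap.linearIndependent_of_isOrthoᵢ (hv.isOrthoᵢ_pairFamily hJ hskew) fun p => by
    rw [pairFamily_apply_self hJ hskew]
    exact hv.apply_self_ne_zero _

theorem two_mul_card_pos_eq [Fintype ι] (hv : IsJOrthonormal g J v)
    (hJ : J ∘ₗ J = -LinearMap.id) (hskew : ∀ v w, g (J v) w = -g v (J w))
    {κ : Type*} [Fintype κ] (f : Basis κ ℝ W) (hf : g.IsOrthoᵢ f)
    (hrank : finrank ℝ W = 2 * Fintype.card ι) :
    2 * #{i | 0 < g (v i) (v i)} = #{j | 0 < g (f j) (f j)} := by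
  have := Module.Finite.of_basis f
  let b := basisOfLinearIndependentOfCardEqFinrank' _
    (hv.linearIndependent_pairFamily hJ hskew) (by simp [hrank, mul_comm])
  have hb : g.IsOrthoᵢ b := by simpa [b] using hv.isOrthoᵢ_pairFamily hJ hskew
  rw [← card_pos_eq_of_isOrthoᵢ b f hb hf]
  simp only [b, coe_basisOfLinearIndependentOfCardEqFinrank', pairFamily_apply_self hJ hskew]
  rw [← univ_product_univ, filter_product_left (fun i => 0 < g (v i) (v i)), card_product,
    card_univ, Fintype.card_fin, mul_comm]

theorem cons {m : ℕ} {v : Fin m → W} (hv : IsJOrthonormal g J v)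
    (hsymm : ∀ v w, g v w = g w v) (hskew : ∀ v w, g (J v) w = -g v (J w)) {x : W}
    (hx : ∀ p, g (pairFamily J v p) x = 0) (hxx : g x x = 1 ∨ g x x = -1) :
    IsJOrthonormal g J (Fin.cons x v : Fin (m + 1) → W) := by
  have hx₀ (j : Fin m) : g (v j) x = 0 := hx (j, 0)
  have hx₁ (j : Fin m) : g (J (v j)) x = 0 := hx (j, 1)
  refine ⟨LinearMap.isOrthoᵢ_def.mpr fun i j hij => ?_, fun i j => ?_, fun i => ?_⟩
  · cases i using Fin.cases <;> cases j using Fin.cases <;>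
      simp only [Fin.cons_zero, Fin.cons_succ]
    · exact absurd rfl hij
    · rw [hsymm]; exact hx₀ _
    · exact hx₀ _
    · exact hv.isOrthoᵢ fun h => hij (congrArg Fin.succ h)
  · cases i using Fin.cases <;> cases j using Fin.cases <;>
      simp only [Fin.cons_zero, Fin.cons_succ]
    · exact apply_self_map_of_skew hsymm hskew x
    · rw [hsymm]; exact hx₁ _
    · rw [← neg_eq_zero, ← hskew]; exact hx₁ _
    · exact hv.apply_map _ _
  · cases i using Fin.cases <;> simp only [Fin.cons_zero, Fin.cons_succ]
    · exact hxx
    · exact hv.apply_self _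

theorem exists_cons [FiniteDimensional ℝ W] {m : ℕ} {v : Fin m → W}
    (hv : IsJOrthonormal g J v) (hsymm : ∀ v w, g v w = g w v) (hJ : J ∘ₗ J = -LinearMap.id)
    (hskew : ∀ v w, g (J v) w = -g v (J w)) (hg : g.SeparatingLeft)
    (hm : 2 * m < finrank ℝ W) :
    ∃ x, IsJOrthonormal g J (Fin.cons x v : Fin (m + 1) → W) := by
  set e := pairFamily J v
  have he : g.IsOrthoᵢ e := hv.isOrthoᵢ_pairFamily hJ hskew
  have he₀ (p : Fin m × Fin 2) : g (e p) (e p) ≠ 0 := by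
    rw [pairFamily_apply_self hJ hskew]
    exact hv.apply_self_ne_zero _
  let S : Submodule ℝ W := LinearMap.ker (LinearMap.pi fun p => g (e p))
  have hS (x : W) : x ∈ S ↔ ∀ p, g (e p) x = 0 := by simp [S, funext_iff]
  obtain ⟨s, hs₀, hs⟩ := exists_ne_zero_forall_apply_eq_zero g e (by simpa [mul_comm] using hm)
  obtain ⟨y, hy⟩ : ∃ y, g s y ≠ 0 := by
    by_contra! h
    exact hs₀ (hg s h)
  -- project `y` onto `S`; this does not change its pairing with `s ∈ S`
  set y' := y - ∑ p, (g (e p) y / g (e p) (e p)) • e p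
  have hsy' : g s y' = g s y := by
    simp [y', map_sum, hsymm s, hs]
  obtain ⟨z, hzS, hz⟩ := exists_mem_apply_self_ne_zero hsymm ((hS s).mpr hs)
    ((hS y').mpr (he.apply_sub_sum_div_smul he₀ y)) (hsy' ▸ hy)
  obtain ⟨c, hc⟩ := exists_smul_apply_self_eq_one_or_neg_one hz
  have hcz (p : Fin m × Fin 2) : g (e p) (c • z) = 0 := by
    rw [map_smul, (hS z).mp hzS p, smul_zero]
  exact ⟨c • z, hv.cons hsymm hskew hcz hc⟩

theorem exists_basis_interleaved [FiniteDimensional ℝ W] {k l : ℕ} {v : Fin (k + l) → W}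
    (hv : IsJOrthonormal g J v) (hJ : J ∘ₗ J = -LinearMap.id)
    (hskew : ∀ v w, g (J v) w = -g v (J w)) (hsign : ∀ i, 0 < g (v i) (v i) ↔ (i : ℕ) < k)
    (hrank : finrank ℝ W = 2 * k + 2 * l) :
    ∃ e : Basis (Fin (2 * k + 2 * l)) ℝ W,
      (∀ i j, i ≠ j → g (e i) (e j) = 0) ∧
      (∀ i : Fin (2 * k + 2 * l),
        g (e i) (e i) = if (i : ℕ) < 2 * k then 1 else -1) ∧
      (∀ i : Fin (k + l),
        e ⟨2 * (i : ℕ) + 1, by have := i.isLt; omega⟩ =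
          J (e ⟨2 * (i : ℕ), by have := i.isLt; omega⟩)) := by
  let idx : Fin (2 * k + 2 * l) ≃ Fin (k + l) × Fin 2 :=
    (finCongr (by ring)).trans finProdFinEquiv.symm
  have hidx (j : Fin (2 * k + 2 * l)) :
      ((idx j).1 : ℕ) = j / 2 ∧ ((idx j).2 : ℕ) = j % 2 := by
    simp [idx]
  have hF : g.IsOrthoᵢ (pairFamily J v ∘ idx) :=
    (hv.isOrthoᵢ_pairFamily hJ hskew).comp_of_injective idx.injective
  refine ⟨basisOfLinearIndependentOfCardEqFinrank' _
    ((hv.linearIndependent_pairFamily hJ hskew).comp _ idx.injective) (by simp [hrank]),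
    by simpa using LinearMap.isOrthoᵢ_def.mp hF, fun j => ?_, fun i => ?_⟩
  · simp only [coe_basisOfLinearIndependentOfCardEqFinrank', Function.comp_apply,
      pairFamily_apply_self hJ hskew]
    have hj := (hsign (idx j).1).trans (by rw [(hidx j).1]; omega : _ ↔ (j : ℕ) < 2 * k)
    rcases hv.apply_self (idx j).1 with h | h <;> rw [h] at hj ⊢ <;> norm_num at hj
    · rw [if_pos hj]
    · rw [if_neg (not_lt.mpr hj)]
  · have h₀ : idx ⟨2 * i, by omega⟩ = (i, 0) := by ext <;> simp [hidx]
    have h₁ : idx ⟨2 * i + 1, by omega⟩ = (i, 1) := by ext <;> simp [hidx]; omega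
    simp only [coe_basisOfLinearIndependentOfCardEqFinrank', Function.comp_apply, h₀, h₁]
    rfl

end IsJOrthonormal

theorem exists_isJOrthonormal [FiniteDimensional ℝ W] (hsymm : ∀ v w, g v w = g w v)
    (hJ : J ∘ₗ J = -LinearMap.id) (hskew : ∀ v w, g (J v) w = -g v (J w))
    (hg : g.SeparatingLeft) (m : ℕ) (hm : 2 * m ≤ finrank ℝ W) :
    ∃ v : Fin m → W, IsJOrthonormal g J v := by
  induction m with
  | zero => exact ⟨Fin.elim0, ⟨fun i => i.elim0, fun i => i.elim0, fun i => i.elim0⟩⟩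
  | succ m ih =>
    obtain ⟨v, hv⟩ := ih (by omega)
    obtain ⟨x, hx⟩ := hv.exists_cons hsymm hJ hskew hg (by omega)
    exact ⟨_, hx⟩

end ComplexStructure

theorem stmt4 {W : Type*} [AddCommGroup W] [Module ℝ W]
    (k l : ℕ) (g : W →ₗ[ℝ] W →ₗ[ℝ] ℝ)
    (hsymm : ∀ v w, g v w = g w v)
    (J : W →ₗ[ℝ] W) (hJ2 : J ∘ₗ J = -LinearMap.id)
    (hskew : ∀ v w, g (J v) w = - g v (J w))
    -- the form `g` has signature `(2k, 2l)`: it admits an orthonormal basis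
    (f : Module.Basis (Fin (2 * k + 2 * l)) ℝ W)
    (hforth : ∀ i j, i ≠ j → g (f i) (f j) = 0)
    (hfnorm : ∀ i : Fin (2 * k + 2 * l),
      g (f i) (f i) = if (i : ℕ) < 2 * k then 1 else -1) :
    ∃ e : Module.Basis (Fin (2 * k + 2 * l)) ℝ W,
      (∀ i j, i ≠ j → g (e i) (e j) = 0) ∧
      (∀ i : Fin (2 * k + 2 * l),
        g (e i) (e i) = if (i : ℕ) < 2 * k then 1 else -1) ∧
      (∀ i : Fin (k + l),
        e ⟨2 * (i : ℕ) + 1, by have := i.isLt; omega⟩ =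
          J (e ⟨2 * (i : ℕ), by have := i.isLt; omega⟩)) := by
  have := Module.Finite.of_basis f
  have hf : g.IsOrthoᵢ f := hforth
  have hf₀ (i) : g (f i) (f i) ≠ 0 := by rw [hfnorm]; split_ifs <;> norm_num
  have hrank : finrank ℝ W = 2 * k + 2 * l := by simp [finrank_eq_card_basis f]
  obtain ⟨v, hv⟩ := exists_isJOrthonormal hsymm hJ2 hskew
    (hf.separatingLeft_of_not_isOrtho_basis_self f hf₀) (k + l) (by omega)
  have hcount : #{j | 0 < g (f j) (f j)} = 2 * k := by
    have hpos (j : Fin (2 * k + 2 * l)) : 0 < g (f j) (f j) ↔ (j : ℕ) < 2 * k := by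
      rw [hfnorm]; split_ifs <;> simp [*]
    simp only [hpos, Fin.card_filter_val_lt]
    omega
  have hk : #{i | 0 < g (v i) (v i)} = k := by
    have := hv.two_mul_card_pos_eq hJ2 hskew f hf (by simp [hrank]; ring)
    omega
  obtain ⟨σ, hσ⟩ := Equiv.exists_perm_iff_of_card_subtype_eq
    (fun i : Fin (k + l) => (i : ℕ) < k) (fun i => 0 < g (v i) (v i))
    (by simp [Fintype.card_subtype, hk, Fin.card_filter_val_lt])
  exact (hv.comp σ.injective).exists_basis_interleaved hJ2 hskew hσ hrank
end

section
/- Let V be a 2n-dimensional real vector space, ω a symplectic form on V, and S the generalized complex structure on V given by S X = ι_X ω for X ∈ V and S α = −ω⁻¹(α) for α ∈ V*. Then S induces the canonical orientation of V ⊕ V* if and only if n is an even number. -/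
/-!
Since `S ∘ S = -1`, the change-of-basis matrix between two bases of the form `Q₁, S Q₁, …` commutes
with `J = [[0, -1], [1, 0]]`, hence has the shape `[[A, B], [-B, A]]`. Over `ℂ` such a matrix is
conjugate to a block triangular one with diagonal blocks `A - iB` and `A + iB`, so its determinant
is `|det (A + iB)|² > 0`: all these bases induce the same orientation.

To compare it with the canonical one, use `(e₁, 0), (0, ω e₁), …, (e₂ₙ, 0), (0, ω e₂ₙ)`. After
sorting even before odd positions, a permutation of sign `(-1) ^ C(2n, 2) = (-1) ^ n`, its matrix
with respect to `{eᵢ, αᵢ}` is `diag (1, G)` with `G` the Gram matrix of `ω`. Finally `det G > 0`: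
`G` is skew-symmetric, so `vᵀ ((1 - t) G + t) v = t |v|²`; hence `det ((1 - t) G + t)` does not
vanish on `[0, 1]`, and `det G` has the sign of `det 1`.
-/

open Equiv

namespace Matrix

variable {m : Type*} [Fintype m] [DecidableEq m]

theorem det_fromBlocks_neg_nonneg (A B : Matrix m m ℝ) : 0 ≤ (fromBlocks A B (-B) A).det := by
  let A' : Matrix m m ℂ := A.map (↑)
  let B' : Matrix m m ℂ := B.map (↑)
  let L : Matrix (m ⊕ m) (m ⊕ m) ℂ := fromBlocks 1 (Complex.I • 1) 0 1
  let R : Matrix (m ⊕ m) (m ⊕ m) ℂ := fromBlocks 1 (-Complex.I • 1) 0 1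
  have hLMR : L * (fromBlocks A B (-B) A).map (↑) * R =
      fromBlocks ((A' + Complex.I • B').map (starRingEnd ℂ)) 0 (-B') (A' + Complex.I • B') := by
    simp only [L, R, fromBlocks_map, fromBlocks_multiply]
    ext (i | i) (j | j) <;> simp [A', B'] <;> ring_nf; simp [Complex.I_sq]
  have hdet := congrArg det hLMR
  simp only [L, R, det_mul, det_fromBlocks_zero₂₁, det_fromBlocks_zero₁₂, det_one, one_mul,
    mul_one] at hdet
  have hmap : ∀ (f : ℂ →+* ℂ) (C : Matrix m m ℂ), (C.map f).det = f C.det :=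
    fun f C => (f.map_det C).symm
  rw [hmap, ← Complex.normSq_eq_conj_mul_self] at hdet
  have hreal : (fromBlocks A B (-B) A).det = Complex.normSq (A' + Complex.I • B').det :=
    Complex.ofReal_injective ((Complex.ofRealHom.map_det _).trans hdet)
  exact hreal ▸ Complex.normSq_nonneg _

theorem eq_fromBlocks_of_commute_J {R : Type*} [CommRing R] {M : Matrix (m ⊕ m) (m ⊕ m) R}
    (h : Commute M (J m R)) :
    M = fromBlocks M.toBlocks₁₁ M.toBlocks₁₂ (-M.toBlocks₁₂) M.toBlocks₁₁ := by
  have hM := fromBlocks_toBlocks M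
  rw [← hM, Commute, SemiconjBy, J, fromBlocks_multiply, fromBlocks_multiply] at h
  simp only [Matrix.mul_zero, Matrix.mul_one, Matrix.mul_neg, Matrix.zero_mul, Matrix.one_mul,
    Matrix.neg_mul, zero_add, add_zero, fromBlocks_inj] at h
  obtain ⟨h₁₂, -, h₂₂, -⟩ := h
  conv_lhs => rw [← hM]
  rw [h₂₂, h₁₂, neg_neg]

theorem det_nonneg_of_commute_J {M : Matrix (m ⊕ m) (m ⊕ m) ℝ} (h : Commute M (J m ℝ)) :
    0 ≤ M.det :=
  eq_fromBlocks_of_commute_J h ▸ det_fromBlocks_neg_nonneg _ _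

theorem det_pos_of_transpose_eq_neg {G : Matrix m m ℝ} (hG : Gᵀ = -G) (h0 : G.det ≠ 0) :
    0 < G.det := by
  have hquad : ∀ v, v ⬝ᵥ G *ᵥ v = 0 := by
    intro v
    have : v ⬝ᵥ G *ᵥ v = -(v ⬝ᵥ G *ᵥ v) := by
      conv_lhs => rw [dotProduct_mulVec, ← mulVec_transpose, hG, neg_mulVec, neg_dotProduct,
        dotProduct_comm]
    linarith
  have hne : ∀ t : ℝ, 0 < t → ((1 - t) • G + t • 1).det ≠ 0 := by
    intro t ht hdet
    obtain ⟨v, hv, hMv⟩ := exists_mulVec_eq_zero_iff.2 hdet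
    have : t * (v ⬝ᵥ v) = 0 := by
      simpa [add_mulVec, smul_mulVec, hquad] using congrArg (v ⬝ᵥ ·) hMv
    exact hv (dotProduct_self_eq_zero.1 ((mul_eq_zero.1 this).resolve_left ht.ne'))
  by_contra hneg
  obtain ⟨t, ht, hφt⟩ := intermediate_value_Icc zero_le_one
    (f := fun t : ℝ => ((1 - t) • G + t • 1).det) (by fun_prop)
    (show (0 : ℝ) ∈ Set.Icc _ _ by simp; linarith)
  rcases ht.1.eq_or_lt with rfl | ht0
  · simp_all
  · exact hne t ht0 hφt

end Matrix

def finSumFinInterleave (m : ℕ) : Fin m ⊕ Fin m ≃ Fin (m + m) where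
  toFun := Sum.elim (fun i => ⟨2 * i, by omega⟩) (fun i => ⟨2 * i + 1, by omega⟩)
  invFun k := if (k : ℕ) % 2 = 0 then .inl ⟨k / 2, by omega⟩ else .inr ⟨k / 2, by omega⟩
  left_inv := by rintro (i | i) <;> simp [Fin.ext_iff]; omega
  right_inv k := by by_cases h : (k : ℕ) % 2 = 0 <;> simp [h, Fin.ext_iff] <;> omega

theorem coe_finSumFinEquiv_finSumFinInterleave_symm (m : ℕ) (k : Fin (m + m)) :
    (finSumFinEquiv ((finSumFinInterleave m).symm k) : ℕ) =
      if (k : ℕ) % 2 = 0 then (k : ℕ) / 2 else (k : ℕ) / 2 + m := by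
  by_cases h : (k : ℕ) % 2 = 0 <;> simp [finSumFinInterleave, h]

theorem Fin.coe_cycleRange {n : ℕ} (i j : Fin n) :
    (cycleRange i j : ℕ) = if j < i then (j : ℕ) + 1 else if j = i then 0 else (j : ℕ) := by
  rcases lt_trichotomy j i with h | h | h
  · simp [coe_cycleRange_of_lt h, h]
  · rw [coe_cycleRange_of_le h.le]; simp [h]
  · simp [cycleRange_of_gt h, not_lt.2 h.le, h.ne']

theorem sign_finSumFinInterleave_symm_trans (m : ℕ) :
    Perm.sign ((finSumFinInterleave m).symm.trans finSumFinEquiv) = (-1) ^ m.choose 2 := by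
  induction m with
  | zero => rfl
  | succ m ih =>
    let D : ∀ k, Perm (Fin (k + k)) := fun k => (finSumFinInterleave k).symm.trans finSumFinEquiv
    have hle : m + m ≤ m + 1 + (m + 1) := by omega
    -- both sides send `2i ↦ i + 1`, `2i + 1 ↦ m + i + 1`, `2m ↦ 0` and fix `2m + 1`
    have hD : Fin.cycleRange ⟨m, by omega⟩ * D (m + 1) = Fin.cycleRange ⟨2 * m, by omega⟩ *
        (D m).viaFintypeEmbedding (Fin.castLEEmb hle) := by
      ext k : 1
      rcases lt_or_ge (k : ℕ) (m + m) with hk | hk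
      · obtain ⟨k', rfl⟩ : ∃ k' : Fin (m + m), Fin.castLEEmb hle k' = k := ⟨⟨k, hk⟩, rfl⟩
        rw [Perm.mul_apply, Perm.mul_apply, Perm.viaFintypeEmbedding_apply_image, Fin.ext_iff]
        simp [D, Fin.coe_cycleRange, coe_finSumFinEquiv_finSumFinInterleave_symm, Fin.lt_def,
          Fin.ext_iff]
        have := k'.isLt
        split_ifs <;> omega
      · rw [Perm.mul_apply, Perm.mul_apply,
          Perm.viaFintypeEmbedding_apply_notMem_range _ _ (by simp; omega), Fin.ext_iff]
        simp [D, Fin.coe_cycleRange, coe_finSumFinEquiv_finSumFinInterleave_symm, Fin.lt_def,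
          Fin.ext_iff]
        have := k.isLt
        split_ifs <;> omega
    have hsign := congrArg Perm.sign hD
    simp only [Perm.sign_mul, Fin.sign_cycleRange, Perm.viaFintypeEmbedding_sign, pow_mul,
      Int.units_sq, one_pow, one_mul] at hsign
    change Perm.sign (D (m + 1)) = _
    rw [Nat.choose_succ_succ', Nat.choose_one_right, pow_add, ← ih, ← hsign, ← mul_assoc,
      ← pow_add, Even.neg_one_pow ⟨m, rfl⟩, one_mul]

theorem Nat.even_choose_two_two_mul_iff (n : ℕ) : Even ((2 * n).choose 2) ↔ Even n := by
  rw [Nat.choose_two_right, mul_assoc, Nat.mul_div_cancel_left _ two_pos, Nat.even_mul]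
  refine ⟨?_, Or.inl⟩
  rintro (h | ⟨r, hr⟩)
  · exact h
  · obtain rfl : n = 0 := by omega
    exact ⟨0, rfl⟩

theorem Units.neg_one_pow_smul_pos_iff {d : ℝ} (hd : 0 < d) (k : ℕ) :
    0 < ((-1 : ℤˣ) ^ k) • d ↔ Even k := by
  rcases k.even_or_odd with h | h
  · simp [h.neg_one_pow, hd, h]
  · simp [h.neg_one_pow, hd.le, Nat.not_even_iff_odd.2 h, Units.smul_def]

namespace Module.Basis

section CommRing

variable {ι ι' κ κ' R M M' : Type*} [CommRing R] [AddCommGroup M] [Module R M]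
  [AddCommGroup M'] [Module R M']

theorem toMatrix_eq_J_of_adapted [Fintype ι] [DecidableEq ι] {J : M →ₗ[R] M}
    (hJ : ∀ x, J (J x) = -x) {c : Basis (ι ⊕ ι) R M} (hc : ∀ i, c (.inr i) = J (c (.inl i))) :
    LinearMap.toMatrix c c J = Matrix.J ι R := by
  have hinl : ∀ j, J (c (.inl j)) = c (.inr j) := fun j => (hc j).symm
  have hinr : ∀ j, J (c (.inr j)) = -c (.inl j) := fun j => by rw [hc, hJ]
  ext (i | i) (j | j) <;>
    simp [LinearMap.toMatrix_apply, Matrix.J, hinl, hinr, Finsupp.single_apply, Matrix.one_apply,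
      eq_comm]

theorem toMatrix_prod_prod (b₁ : Basis ι R M) (b₂ : Basis ι' R M') (c₁ : Basis κ R M)
    (c₂ : Basis κ' R M') :
    (b₁.prod b₂).toMatrix (c₁.prod c₂) =
      Matrix.fromBlocks (b₁.toMatrix c₁) 0 0 (b₂.toMatrix c₂) := by
  ext (i | i) (j | j) <;> simp [toMatrix_apply]

theorem det_prod_prod [Fintype ι] [DecidableEq ι] [Fintype ι'] [DecidableEq ι']
    (b₁ c₁ : Basis ι R M) (b₂ c₂ : Basis ι' R M') :
    (b₁.prod b₂).det (c₁.prod c₂) = b₁.det c₁ * b₂.det c₂ := by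
  rw [det_apply, toMatrix_prod_prod, Matrix.det_fromBlocks_zero₂₁, det_apply, det_apply]

theorem det_reindex_reindex [Fintype ι] [DecidableEq ι] [Fintype κ] [DecidableEq κ]
    (b c : Basis ι R M) (e₁ e₂ : ι ≃ κ) :
    (b.reindex e₁).det (c.reindex e₂) = Perm.sign (e₂.symm.trans e₁) • b.det c := by
  have : ⇑(c.reindex e₂) = c.reindex e₁ ∘ (e₂.symm.trans e₁) := by ext; simp
  rw [this, AlternatingMap.map_perm, det_reindex, coe_reindex, Function.comp_assoc,
    e₁.symm_comp_self, Function.comp_id]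

end CommRing

variable {ι W : Type*} [AddCommGroup W] [Module ℝ W] {J : W →ₗ[ℝ] W}

theorem orientation_eq_of_adapted [Fintype ι] [DecidableEq ι] (hJ : ∀ x, J (J x) = -x)
    {c c' : Basis (ι ⊕ ι) ℝ W} (hc : ∀ i, c (.inr i) = J (c (.inl i)))
    (hc' : ∀ i, c' (.inr i) = J (c' (.inl i))) :
    c.orientation = c'.orientation := by
  have hcomm : Commute (c.toMatrix c') (Matrix.J ι ℝ) := by
    calc c.toMatrix c' * Matrix.J ι ℝ = c.toMatrix c' * LinearMap.toMatrix c' c' J := by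
          rw [toMatrix_eq_J_of_adapted hJ hc']
      _ = LinearMap.toMatrix c c J * c.toMatrix c' := by
          rw [basis_toMatrix_mul_linearMap_toMatrix, linearMap_toMatrix_mul_basis_toMatrix]
      _ = Matrix.J ι ℝ * c.toMatrix c' := by rw [toMatrix_eq_J_of_adapted hJ hc]
  rw [orientation_eq_iff_det_pos, det_apply]
  exact (Matrix.det_nonneg_of_commute_J hcomm).lt_of_ne
    (det_apply c c' ▸ c.isUnit_det c').ne_zero.symm

theorem orientation_eq_of_adapted_fin {m N : ℕ} (hN : m + m = N) (hJ : ∀ x, J (J x) = -x)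
    {c c' : Basis (Fin N) ℝ W}
    (hc : ∀ i : Fin m, c ⟨2 * i + 1, by have := i.isLt; omega⟩ =
      J (c ⟨2 * i, by have := i.isLt; omega⟩))
    (hc' : ∀ i : Fin m, c' ⟨2 * i + 1, by have := i.isLt; omega⟩ =
      J (c' ⟨2 * i, by have := i.isLt; omega⟩)) :
    c.orientation = c'.orientation := by
  let u := (finSumFinInterleave m).trans (finCongr hN)
  have key : (c.reindex u.symm).orientation = (c'.reindex u.symm).orientation :=
    orientation_eq_of_adapted hJ (fun i => by simpa [u, finSumFinInterleave] using hc i)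
      (fun i => by simpa [u, finSumFinInterleave] using hc' i)
  rwa [orientation_reindex, orientation_reindex,
    (Orientation.reindex ℝ W u.symm).injective.eq_iff] at key

theorem dualBasis_det_map_pos [Fintype ι] [DecidableEq ι] (e : Basis ι ℝ W)
    (ω : W ≃ₗ[ℝ] Dual ℝ W) (hω : (ω : W →ₗ[ℝ] W →ₗ[ℝ] ℝ).IsAlt) :
    0 < e.dualBasis.det (e.map ω) := by
  rw [det_apply]
  refine Matrix.det_pos_of_transpose_eq_neg ?_
    (det_apply e.dualBasis (e.map ω) ▸ e.dualBasis.isUnit_det (e.map ω)).ne_zero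
  ext i j
  simpa [toMatrix_apply] using (hω.neg (e j) (e i)).symm

end Module.Basis

theorem apply_apply_eq_neg_of_surjective {R V V' : Type*} [CommRing R] [AddCommGroup V]
    [Module R V] [AddCommGroup V'] [Module R V'] {ω : V →ₗ[R] V'} (hω : Function.Surjective ω)
    {S : (V × V') →ₗ[R] (V × V')} (hS₁ : ∀ x, S (x, 0) = (0, ω x))
    (hS₂ : ∀ x, S (0, ω x) = (-x, 0)) (p : V × V') : S (S p) = -p := by
  obtain ⟨x, ξ⟩ := p
  obtain ⟨y, rfl⟩ := hω ξ
  have hsplit : (x, ω y) = (x, 0) + (0, ω y) := by simp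
  have hneg : ((-y, 0) : V × V') = -(y, 0) := by simp
  rw [hsplit, map_add, hS₁, hS₂, map_add, hS₂, hneg, map_neg, hS₁]
  simp

theorem stmt8 {V : Type*} [AddCommGroup V] [Module ℝ V]
    (n : ℕ)
    (ω : V →ₗ[ℝ] V →ₗ[ℝ] ℝ)
    (halt : ∀ x, ω x x = 0)
    (hbij : Function.Bijective fun x : V => (ω x : Module.Dual ℝ V))
    (S : (V × Module.Dual ℝ V) →ₗ[ℝ] (V × Module.Dual ℝ V))
    (hS1 : ∀ x : V, S (x, 0) = (0, ω x))
    (hS2 : ∀ x : V, S (0, ω x) = (-x, 0))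
    (e : Module.Basis (Fin (2 * n)) ℝ V) :
    (∀ c : Module.Basis (Fin (4 * n)) ℝ (V × Module.Dual ℝ V),
      (∀ i : Fin (2 * n),
        c ⟨2 * (i : ℕ) + 1, by have := i.isLt; omega⟩ =
          S (c ⟨2 * (i : ℕ), by have := i.isLt; omega⟩)) →
      c.orientation =
        ((e.prod e.dualBasis).reindex
          (finSumFinEquiv.trans (finCongr (by ring)))).orientation)
    ↔ Even n := by
  classical
  have hm : 2 * n + 2 * n = 4 * n := by ring
  have hJ := apply_apply_eq_neg_of_surjective hbij.2 hS1 hS2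
  let W := LinearEquiv.ofBijective ω hbij
  let c₀ := (e.prod (e.map W)).reindex ((finSumFinInterleave (2 * n)).trans (finCongr hm))
  have hc₀ : ∀ i : Fin (2 * n), c₀ ⟨2 * i + 1, by have := i.isLt; omega⟩ =
      S (c₀ ⟨2 * i, by have := i.isLt; omega⟩) := fun i => by
    have : (2 * (i : ℕ) + 1) / 2 = i := by omega
    simp [c₀, W, finSumFinInterleave, hS1, this]
  have hsign : Perm.sign (((finSumFinInterleave (2 * n)).trans (finCongr hm)).symm.trans
      (finSumFinEquiv.trans (finCongr hm))) = (-1) ^ (2 * n).choose 2 :=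
    (Perm.sign_symm_trans_trans ((finSumFinInterleave (2 * n)).symm.trans finSumFinEquiv)
      (finCongr hm)).trans (sign_finSumFinInterleave_symm_trans _)
  have key : ((e.prod e.dualBasis).reindex (finSumFinEquiv.trans (finCongr hm))).orientation =
      c₀.orientation ↔ Even n := by
    rw [Module.Basis.orientation_eq_iff_det_pos, Module.Basis.det_reindex_reindex,
      Module.Basis.det_prod_prod, Module.Basis.det_self, one_mul, hsign,
      Units.neg_one_pow_smul_pos_iff (e.dualBasis_det_map_pos W halt),
      Nat.even_choose_two_two_mul_iff]
  refine ⟨fun h => key.1 (h c₀ hc₀).symm, fun hn c hc => ?_⟩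
  rw [Module.Basis.orientation_eq_of_adapted_fin hm hJ hc hc₀]
  exact (key.2 hn).symm
end

section
/- Let W be a 4-dimensional real vector space with a neutral metric g (signature (2,2)) and orthonormal basis e_1, e_2, e_3, e_4 with ε_1 = ε_2 = 1, ε_3 = ε_4 = −1, where ε_k = ‖e_k‖². Define skew-symmetric endomorphisms S_{ij} of W by S_{ij}e_k = ε_k(δ_{ik}e_j − δ_{kj}e_i), and set I_1 = S_{12} − S_{34}, I_2 = S_{13} − S_{24}, I_3 = S_{14} + S_{23}, J_1 = S_{12} + S_{34}, J_2 = S_{13} + S_{24}, J_3 = S_{14} − S_{23}. Then an endomorphism K = Σ_{r=1}^{3}(x_r I_r + y_r J_r) satisfies K² = −Id if and only if either (x_1² − x_2² − x_3² = 1 and y_1 = y_2 = y_3 = 0) or (y_1² − y_2² − y_3² = 1 and x_1 = x_2 = x_3 = 0). Consequently, since I_1, I_2, I_3, J_1, J_2, J_3 form a basis of the space of g-skew-symmetric endomorphisms of W, the set of complex structures on W compatible with g is the disjoint union of two copies of the hyperboloid x_1² − x_2² − x_3² = 1. -/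
/-!
In the orthonormal basis `e` the Gram matrix of `g` is `diag(1, 1, -1, -1)`, so the `g`-skew
endomorphisms are exactly those whose matrix has the shape `neutralSkewMatrix x y`, and this is
also the matrix of `Σ (x_r I_r + y_r J_r)`. Put `a = x + y` and `b = x - y`. If the square of
that matrix is `-1`, its diagonal entries give `a₀² - a₁² - a₂² = 1` (so `a₀ ≠ 0`) and `b₀² = a₀²`,
while two off-diagonal entries say that `b` is proportional to `a`. Hence `b = ± a`, that is
`y = 0` or `x = 0`.
-/

open Matrix

section General

variable {ι R M : Type*} [Fintype ι] [DecidableEq ι] [CommRing R] [AddCommGroup M] [Module R M]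

theorem LinearMap.comp_self_eq_neg_id_iff_toMatrix (e : Module.Basis ι R M) (K : M →ₗ[R] M) :
    K ∘ₗ K = -LinearMap.id ↔ toMatrix e e K * toMatrix e e K = -1 := by
  rw [← Module.End.mul_eq_comp, ← LinearMap.toMatrix_mul, ← LinearMap.toMatrix_id e, ← map_neg,
    (LinearMap.toMatrix e e).injective.eq_iff]

theorem LinearMap.isSkewAdjoint_iff_toMatrix (g : M →ₗ[R] M →ₗ[R] R) (e : Module.Basis ι R M)
    (K : M →ₗ[R] M) :
    (∀ v w, g (K v) w = -g v (K w)) ↔ (toMatrix₂ e e g).IsSkewAdjoint (toMatrix e e K) := by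
  rw [Matrix.IsSkewAdjoint, ← map_neg, ← isAdjointPair_toLinearMap₂ e e, toLinearMap₂_toMatrix₂,
    toLin_toMatrix, toLin_toMatrix]
  simp [LinearMap.IsAdjointPair]

end General

theorem eq_or_eq_neg_of_sq_eq_of_proportional {R : Type*} [CommRing R] [IsDomain R]
    (a₀ a₁ a₂ b₀ b₁ b₂ : R) (ha : a₀ ≠ 0) (hsq : b₀ ^ 2 = a₀ ^ 2)
    (h₁ : a₀ * b₁ = a₁ * b₀) (h₂ : a₀ * b₂ = a₂ * b₀) :
    (b₀ = a₀ ∧ b₁ = a₁ ∧ b₂ = a₂) ∨ (b₀ = -a₀ ∧ b₁ = -a₁ ∧ b₂ = -a₂) := by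
  rcases sq_eq_sq_iff_eq_or_eq_neg.mp hsq with rfl | rfl
  · exact Or.inl ⟨rfl, mul_left_cancel₀ ha (by linear_combination h₁),
      mul_left_cancel₀ ha (by linear_combination h₂)⟩
  · exact Or.inr ⟨rfl, mul_left_cancel₀ ha (by linear_combination h₁),
      mul_left_cancel₀ ha (by linear_combination h₂)⟩

def neutralSkewMatrix (x y : Fin 3 → ℝ) : Matrix (Fin 4) (Fin 4) ℝ :=
  !![0, -(x 0 + y 0), x 1 + y 1, x 2 + y 2;
    x 0 + y 0, 0, x 2 - y 2, -(x 1 - y 1);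
    x 1 + y 1, x 2 - y 2, 0, -(x 0 - y 0);
    x 2 + y 2, -(x 1 - y 1), x 0 - y 0, 0]

theorem neutralSkewMatrix_inj {x y x' y' : Fin 3 → ℝ} :
    neutralSkewMatrix x y = neutralSkewMatrix x' y' ↔ x = x' ∧ y = y' := by
  refine ⟨fun h => ?_, fun h => h.1 ▸ h.2 ▸ rfl⟩
  have h10 := congr_fun₂ h 1 0
  have h20 := congr_fun₂ h 2 0
  have h30 := congr_fun₂ h 3 0
  have h12 := congr_fun₂ h 1 2
  have h13 := congr_fun₂ h 1 3
  have h23 := congr_fun₂ h 2 3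
  simp only [neutralSkewMatrix, of_apply, cons_val', cons_val_zero, cons_val_one, cons_val,
    cons_val_fin_one] at h10 h20 h30 h12 h13 h23
  constructor <;> ext i <;> fin_cases i <;> simp <;> linarith

theorem isSkewAdjoint_diagonal_iff_exists_neutralSkewMatrix (A : Matrix (Fin 4) (Fin 4) ℝ) :
    (diagonal ![1, 1, -1, -1]).IsSkewAdjoint A ↔ ∃ x y, A = neutralSkewMatrix x y := by
  constructor
  · intro h
    refine ⟨![(A 1 0 - A 2 3) / 2, (A 2 0 - A 1 3) / 2, (A 3 0 + A 1 2) / 2],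
      ![(A 1 0 + A 2 3) / 2, (A 2 0 + A 1 3) / 2, (A 3 0 - A 1 2) / 2], ?_⟩
    ext i j
    have hij := congr_fun₂ h i j
    have hji := congr_fun₂ h j i
    fin_cases i <;> fin_cases j <;> simp [neutralSkewMatrix] at hij hji ⊢ <;> linarith
  · rintro ⟨x, y, rfl⟩
    ext i j
    fin_cases i <;> fin_cases j <;> simp [neutralSkewMatrix]

theorem neutralSkewMatrix_mul_self_eq_neg_one_iff (x y : Fin 3 → ℝ) :
    neutralSkewMatrix x y * neutralSkewMatrix x y = -1 ↔
      (x 0 ^ 2 - x 1 ^ 2 - x 2 ^ 2 = 1 ∧ y = 0) ∨ (y 0 ^ 2 - y 1 ^ 2 - y 2 ^ 2 = 1 ∧ x = 0) := by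
  constructor
  · intro h
    have h00 := congr_fun₂ h 0 0
    have h11 := congr_fun₂ h 1 1
    have h22 := congr_fun₂ h 2 2
    have h33 := congr_fun₂ h 3 3
    have h02 := congr_fun₂ h 0 2
    have h03 := congr_fun₂ h 0 3
    simp only [neutralSkewMatrix, mul_apply, Fin.sum_univ_four, of_apply, cons_val', cons_val,
      cons_val_zero, cons_val_one, cons_val_fin_one, Matrix.neg_apply, one_apply_eq, ne_eq,
      Fin.reduceEq, not_false_eq_true, one_apply_ne, mul_zero, zero_mul, zero_add, add_zero,
      neg_zero] at h00 h11 h22 h33 h02 h03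
    have ha : x 0 + y 0 ≠ 0 := by
      intro h0
      nlinarith [sq_nonneg (x 1 + y 1), sq_nonneg (x 2 + y 2)]
    rcases eq_or_eq_neg_of_sq_eq_of_proportional (x 0 + y 0) (x 1 + y 1) (x 2 + y 2)
      (x 0 - y 0) (x 1 - y 1) (x 2 - y 2) ha
      (by linear_combination (h00 + h11 - h22 - h33) / 2)
      (by linear_combination h03) (by linear_combination -h02) with ⟨h0, h1, h2⟩ | ⟨h0, h1, h2⟩
    · have hy : y = 0 := by ext i; fin_cases i <;> simp <;> linarith
      simp only [hy, Pi.zero_apply, add_zero] at h00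
      exact Or.inl ⟨by linear_combination -h00, hy⟩
    · have hx : x = 0 := by ext i; fin_cases i <;> simp <;> linarith
      simp only [hx, Pi.zero_apply, zero_add] at h00
      exact Or.inr ⟨by linear_combination -h00, hx⟩
  · rintro (⟨hx, rfl⟩ | ⟨hy, rfl⟩) <;> ext i j <;> fin_cases i <;> fin_cases j <;>
      simp [neutralSkewMatrix, mul_apply, Fin.sum_univ_four] <;> linarith

section NeutralBasis

variable {W : Type*} [AddCommGroup W] [Module ℝ W] {g : W →ₗ[ℝ] W →ₗ[ℝ] ℝ}
  {e : Module.Basis (Fin 4) ℝ W}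

theorem isSkewAdjoint_iff_exists_toMatrix_eq_neutralSkewMatrix
    (horth : ∀ i j, i ≠ j → g (e i) (e j) = 0)
    (hnorm : ∀ i : Fin 4, g (e i) (e i) = if (i : ℕ) < 2 then 1 else -1) (K : W →ₗ[ℝ] W) :
    (∀ v w, g (K v) w = -g v (K w)) ↔
      ∃ x y, LinearMap.toMatrix e e K = neutralSkewMatrix x y := by
  have gram : LinearMap.toMatrix₂ e e g = diagonal ![1, 1, -1, -1] := by
    ext i j
    rw [LinearMap.toMatrix₂_apply]
    by_cases hij : i = j
    · subst hij
      fin_cases i <;> simp [hnorm]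
    · simp [horth i j hij, hij]
  rw [LinearMap.isSkewAdjoint_iff_toMatrix g e, gram,
    isSkewAdjoint_diagonal_iff_exists_neutralSkewMatrix]

theorem comp_self_eq_neg_id_iff_of_toMatrix_eq {K : W →ₗ[ℝ] W} {x y : Fin 3 → ℝ}
    (hK : LinearMap.toMatrix e e K = neutralSkewMatrix x y) :
    K ∘ₗ K = -LinearMap.id ↔
      (x 0 ^ 2 - x 1 ^ 2 - x 2 ^ 2 = 1 ∧ y = 0) ∨ (y 0 ^ 2 - y 1 ^ 2 - y 2 ^ 2 = 1 ∧ x = 0) := by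
  rw [LinearMap.comp_self_eq_neg_id_iff_toMatrix e, hK, neutralSkewMatrix_mul_self_eq_neg_one_iff]

theorem toMatrix_combination_eq_neutralSkewMatrix
    (hnorm : ∀ i : Fin 4, g (e i) (e i) = if (i : ℕ) < 2 then 1 else -1)
    {S : Fin 4 → Fin 4 → (W →ₗ[ℝ] W)}
    (hS : ∀ i j k : Fin 4, S i j (e k) = g (e k) (e k) •
      ((if i = k then (1 : ℝ) else 0) • e j - (if k = j then (1 : ℝ) else 0) • e i))
    {I1 I2 I3 J1 J2 J3 : W →ₗ[ℝ] W}
    (hI1 : I1 = S 0 1 - S 2 3) (hI2 : I2 = S 0 2 - S 1 3) (hI3 : I3 = S 0 3 + S 1 2)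
    (hJ1 : J1 = S 0 1 + S 2 3) (hJ2 : J2 = S 0 2 + S 1 3) (hJ3 : J3 = S 0 3 - S 1 2)
    (x y : Fin 3 → ℝ) :
    LinearMap.toMatrix e e (x 0 • I1 + x 1 • I2 + x 2 • I3 + y 0 • J1 + y 1 • J2 + y 2 • J3) =
      neutralSkewMatrix x y := by
  subst hI1 hI2 hI3 hJ1 hJ2 hJ3
  ext k l
  rw [LinearMap.toMatrix_apply]
  fin_cases k <;> fin_cases l <;> simp [hS, hnorm, neutralSkewMatrix] <;> ring

end NeutralBasis

theorem stmt12_general {W : Type*} [AddCommGroup W] [Module ℝ W]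
    (g : W →ₗ[ℝ] W →ₗ[ℝ] ℝ) (e : Module.Basis (Fin 4) ℝ W)
    (horth : ∀ i j, i ≠ j → g (e i) (e j) = 0)
    (hnorm : ∀ i : Fin 4, g (e i) (e i) = if (i : ℕ) < 2 then 1 else -1)
    (S : Fin 4 → Fin 4 → (W →ₗ[ℝ] W))
    (hS : ∀ i j k : Fin 4, S i j (e k) = g (e k) (e k) •
      ((if i = k then (1 : ℝ) else 0) • e j - (if k = j then (1 : ℝ) else 0) • e i))
    (I1 I2 I3 J1 J2 J3 : W →ₗ[ℝ] W)
    (hI1 : I1 = S 0 1 - S 2 3) (hI2 : I2 = S 0 2 - S 1 3) (hI3 : I3 = S 0 3 + S 1 2)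
    (hJ1 : J1 = S 0 1 + S 2 3) (hJ2 : J2 = S 0 2 + S 1 3) (hJ3 : J3 = S 0 3 - S 1 2) :
    (∀ x y : Fin 3 → ℝ,
      (x 0 • I1 + x 1 • I2 + x 2 • I3 + y 0 • J1 + y 1 • J2 + y 2 • J3) ∘ₗ
        (x 0 • I1 + x 1 • I2 + x 2 • I3 + y 0 • J1 + y 1 • J2 + y 2 • J3)
        = -LinearMap.id
      ↔ ((x 0 ^ 2 - x 1 ^ 2 - x 2 ^ 2 = 1 ∧ y = 0) ∨
         (y 0 ^ 2 - y 1 ^ 2 - y 2 ^ 2 = 1 ∧ x = 0))) ∧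
    ({K : W →ₗ[ℝ] W | K ∘ₗ K = -LinearMap.id ∧ ∀ v w, g (K v) w = - g v (K w)} =
      {K : W →ₗ[ℝ] W | ∃ x : Fin 3 → ℝ, x 0 ^ 2 - x 1 ^ 2 - x 2 ^ 2 = 1 ∧
          K = x 0 • I1 + x 1 • I2 + x 2 • I3} ∪
      {K : W →ₗ[ℝ] W | ∃ y : Fin 3 → ℝ, y 0 ^ 2 - y 1 ^ 2 - y 2 ^ 2 = 1 ∧
          K = y 0 • J1 + y 1 • J2 + y 2 • J3}) ∧
    Disjoint
      {K : W →ₗ[ℝ] W | ∃ x : Fin 3 → ℝ, x 0 ^ 2 - x 1 ^ 2 - x 2 ^ 2 = 1 ∧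
          K = x 0 • I1 + x 1 • I2 + x 2 • I3}
      {K : W →ₗ[ℝ] W | ∃ y : Fin 3 → ℝ, y 0 ^ 2 - y 1 ^ 2 - y 2 ^ 2 = 1 ∧
          K = y 0 • J1 + y 1 • J2 + y 2 • J3} := by
  have hmat := toMatrix_combination_eq_neutralSkewMatrix hnorm hS hI1 hI2 hI3 hJ1 hJ2 hJ3
  have hmatI : ∀ x, LinearMap.toMatrix e e (x 0 • I1 + x 1 • I2 + x 2 • I3) =
      neutralSkewMatrix x 0 := fun x => by simpa using hmat x 0
  have hmatJ : ∀ y, LinearMap.toMatrix e e (y 0 • J1 + y 1 • J2 + y 2 • J3) =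
      neutralSkewMatrix 0 y := fun y => by simpa [add_assoc] using hmat 0 y
  have skew_iff := isSkewAdjoint_iff_exists_toMatrix_eq_neutralSkewMatrix horth hnorm
  refine ⟨fun x y => comp_self_eq_neg_id_iff_of_toMatrix_eq (hmat x y), ?_, ?_⟩
  · ext K
    constructor
    · rintro ⟨hKK, hK⟩
      obtain ⟨x, y, hxy⟩ := (skew_iff K).1 hK
      obtain rfl := (LinearMap.toMatrix e e).injective (hxy.trans (hmat x y).symm)
      rcases (comp_self_eq_neg_id_iff_of_toMatrix_eq (hmat x y)).1 hKK with
        ⟨hq, rfl⟩ | ⟨hq, rfl⟩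
      · exact Or.inl ⟨x, hq, by simp⟩
      · exact Or.inr ⟨y, hq, by simp [add_assoc]⟩
    · rintro (⟨x, hx, rfl⟩ | ⟨y, hy, rfl⟩)
      · exact ⟨(comp_self_eq_neg_id_iff_of_toMatrix_eq (hmatI x)).2 (Or.inl ⟨hx, rfl⟩),
          (skew_iff _).2 ⟨x, 0, hmatI x⟩⟩
      · exact ⟨(comp_self_eq_neg_id_iff_of_toMatrix_eq (hmatJ y)).2 (Or.inr ⟨hy, rfl⟩),
          (skew_iff _).2 ⟨0, y, hmatJ y⟩⟩
  · rw [Set.disjoint_left]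
    rintro K ⟨x, hx, rfl⟩ ⟨y, -, hK⟩
    obtain ⟨rfl, -⟩ :=
      neutralSkewMatrix_inj.1 ((hmatI x).symm.trans ((congrArg _ hK).trans (hmatJ y)))
    simp at hx

theorem stmt12 {W : Type*} [AddCommGroup W] [Module ℝ W]
    (g : W →ₗ[ℝ] W →ₗ[ℝ] ℝ) (hsymm : ∀ v w, g v w = g w v)
    (e : Module.Basis (Fin 4) ℝ W)
    (horth : ∀ i j, i ≠ j → g (e i) (e j) = 0)
    (hnorm : ∀ i : Fin 4, g (e i) (e i) = if (i : ℕ) < 2 then 1 else -1)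
    (S : Fin 4 → Fin 4 → (W →ₗ[ℝ] W))
    (hS : ∀ i j k : Fin 4, S i j (e k) = g (e k) (e k) •
      ((if i = k then (1 : ℝ) else 0) • e j - (if k = j then (1 : ℝ) else 0) • e i))
    (I1 I2 I3 J1 J2 J3 : W →ₗ[ℝ] W)
    (hI1 : I1 = S 0 1 - S 2 3) (hI2 : I2 = S 0 2 - S 1 3) (hI3 : I3 = S 0 3 + S 1 2)
    (hJ1 : J1 = S 0 1 + S 2 3) (hJ2 : J2 = S 0 2 + S 1 3) (hJ3 : J3 = S 0 3 - S 1 2) :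
    (∀ x y : Fin 3 → ℝ,
      (x 0 • I1 + x 1 • I2 + x 2 • I3 + y 0 • J1 + y 1 • J2 + y 2 • J3) ∘ₗ
        (x 0 • I1 + x 1 • I2 + x 2 • I3 + y 0 • J1 + y 1 • J2 + y 2 • J3)
        = -LinearMap.id
      ↔ ((x 0 ^ 2 - x 1 ^ 2 - x 2 ^ 2 = 1 ∧ y = 0) ∨
         (y 0 ^ 2 - y 1 ^ 2 - y 2 ^ 2 = 1 ∧ x = 0))) ∧
    ({K : W →ₗ[ℝ] W | K ∘ₗ K = -LinearMap.id ∧ ∀ v w, g (K v) w = - g v (K w)} =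
      {K : W →ₗ[ℝ] W | ∃ x : Fin 3 → ℝ, x 0 ^ 2 - x 1 ^ 2 - x 2 ^ 2 = 1 ∧
          K = x 0 • I1 + x 1 • I2 + x 2 • I3} ∪
      {K : W →ₗ[ℝ] W | ∃ y : Fin 3 → ℝ, y 0 ^ 2 - y 1 ^ 2 - y 2 ^ 2 = 1 ∧
          K = y 0 • J1 + y 1 • J2 + y 2 • J3}) ∧
    Disjoint
      {K : W →ₗ[ℝ] W | ∃ x : Fin 3 → ℝ, x 0 ^ 2 - x 1 ^ 2 - x 2 ^ 2 = 1 ∧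
          K = x 0 • I1 + x 1 • I2 + x 2 • I3}
      {K : W →ₗ[ℝ] W | ∃ y : Fin 3 → ℝ, y 0 ^ 2 - y 1 ^ 2 - y 2 ^ 2 = 1 ∧
          K = y 0 • J1 + y 1 • J2 + y 2 • J3} :=
  stmt12_general g e horth hnorm S hS I1 I2 I3 J1 J2 J3 hI1 hI2 hI3 hJ1 hJ2 hJ3
end

section
/- Let W be a 4-dimensional real vector space with a neutral metric g and oriented orthonormal basis e_1, e_2, e_3, e_4 (ε_1 = ε_2 = 1, ε_3 = ε_4 = −1), and define S_{ij} and I_1 = S_{12} − S_{34}, I_2 = S_{13} − S_{24}, I_3 = S_{14} + S_{23} as before. Then a complex structure K on W compatible with g induces the orientation of W determined by (e_1, e_2, e_3, e_4) if and only if K = x_1 I_1 + x_2 I_2 + x_3 I_3 with x_1² − x_2² − x_3² = 1; that is, J⁺(W) is the hyperboloid {Σ_{r=1}^{3} x_r I_r : x_1² − x_2² − x_3² = 1}. -/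
/-!
All bases of the form `(v₁, K v₁, v₂, K v₂)` induce the same orientation: in any one of them `K`
has the matrix `J₀`, so the change of basis between two of them commutes with `J₀`. It is thus a
complex `2 × 2` matrix seen as a real `4 × 4` one, and its determinant `|det_ℂ|²` is positive.
Hence it suffices to test the single adapted basis `(e 0, K (e 0), e 2, K (e 2))`, whose
determinant with respect to `e` is a `2 × 2` minor of the matrix `A` of `K`.

Compatibility with `g` makes `A` skew for the signature `(1, 1, -1, -1)`, i.e. the sum of a
self-dual part `Σ bᵣ Iᵣ` and an anti-self-dual part with coordinates `a`. The equation `A² = -1`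
forces `a ⊗ b = 0`, so `A` is self-dual or anti-self-dual, with `b` resp. `a` on the hyperboloid.
The minor is `x 0 ^ 2 - x 2 ^ 2 = 1 + x 1 ^ 2` in the first case and its negative in the second.
-/

open Module Matrix

def J₀ : Matrix (Fin 4) (Fin 4) ℝ := !![0, -1, 0, 0; 1, 0, 0, 0; 0, 0, 0, -1; 0, 0, 1, 0]

lemma det_complexBlock (a b c d e f g h : ℝ) :
    (!![a, -b, e, -f; b, a, f, e; c, -d, g, -h; d, c, h, g] : Matrix (Fin 4) (Fin 4) ℝ).det =
      (a * g - b * h - c * e + d * f) ^ 2 + (a * h + b * g - c * f - d * e) ^ 2 := by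
  simp [det_succ_row_zero, Fin.sum_univ_succ, Fin.succAbove]
  ring

def adaptedMinor (A : Matrix (Fin 4) (Fin 4) ℝ) : ℝ := A 1 0 * A 3 2 - A 1 2 * A 3 0

section ComplexStructure

variable {V : Type*} [AddCommGroup V] [Module ℝ V] {K : V →ₗ[ℝ] V}

lemma LinearMap.toMatrix_eq_J₀ (hK : K ∘ₗ K = -LinearMap.id) (c : Basis (Fin 4) ℝ V)
    (h1 : c 1 = K (c 0)) (h3 : c 3 = K (c 2)) : LinearMap.toMatrix c c K = J₀ := by
  have hKK (v : V) : K (K v) = -v := LinearMap.congr_fun hK v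
  have hK1 : K (c 1) = -c 0 := by rw [h1, hKK]
  have hK3 : K (c 3) = -c 2 := by rw [h3, hKK]
  ext i j
  rw [LinearMap.toMatrix_apply]
  fin_cases j <;> simp [← h1, ← h3, hK1, hK3, Finsupp.single_apply, J₀] <;> fin_cases i <;> simp

lemma Module.Basis.repr_apply_eq_J₀_mulVec (hK : K ∘ₗ K = -LinearMap.id)
    (c : Basis (Fin 4) ℝ V) (h1 : c 1 = K (c 0)) (h3 : c 3 = K (c 2)) (v : V) :
    c.repr (K v) = J₀ *ᵥ c.repr v := by
  rw [← LinearMap.toMatrix_eq_J₀ hK c h1 h3, LinearMap.toMatrix_mulVec_repr]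

lemma Module.Basis.orientation_eq_of_adapted_s13 (hK : K ∘ₗ K = -LinearMap.id)
    (c c' : Basis (Fin 4) ℝ V) (h1 : c 1 = K (c 0)) (h3 : c 3 = K (c 2))
    (h1' : c' 1 = K (c' 0)) (h3' : c' 3 = K (c' 2)) :
    c.orientation = c'.orientation := by
  rw [orientation_eq_iff_det_pos]
  set u := c.repr (c' 0)
  set v := c.repr (c' 2)
  have hP : c.toMatrix c' = !![u 0, -u 1, v 0, -v 1; u 1, u 0, v 1, v 0;
      u 2, -u 3, v 2, -v 3; u 3, u 2, v 3, v 2] := by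
    ext i j
    rw [toMatrix_apply]
    fin_cases j
    · fin_cases i <;> rfl
    · rw [show ((⟨1, _⟩ : Fin 4)) = 1 from rfl, h1', repr_apply_eq_J₀_mulVec hK c h1 h3]
      fin_cases i <;> simp [J₀, mulVec, dotProduct, Fin.sum_univ_four, u]
    · fin_cases i <;> rfl
    · rw [show ((⟨3, _⟩ : Fin 4)) = 3 from rfl, h3', repr_apply_eq_J₀_mulVec hK c h1 h3]
      fin_cases i <;> simp [J₀, mulVec, dotProduct, Fin.sum_univ_four, v]
  have hne : c.det c' ≠ 0 := (c.isUnit_det c').ne_zero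
  rw [det_apply, hP, det_complexBlock] at hne ⊢
  exact lt_of_le_of_ne (by positivity) hne.symm

lemma Module.Basis.forall_adapted_orientation_eq_iff (hK : K ∘ₗ K = -LinearMap.id)
    (b : Basis (Fin 4) ℝ V) (h1 : b 1 = K (b 0)) (h3 : b 3 = K (b 2))
    (o : Orientation ℝ V (Fin 4)) :
    (∀ c : Basis (Fin 4) ℝ V, c 1 = K (c 0) → c 3 = K (c 2) → c.orientation = o) ↔
      b.orientation = o :=
  ⟨fun h => h b h1 h3, fun h c hc1 hc3 => (orientation_eq_of_adapted_s13 hK c b hc1 hc3 h1 h3).trans h⟩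

lemma Module.Basis.det_adapted (e : Basis (Fin 4) ℝ V) (K : V →ₗ[ℝ] V) :
    e.det ![e 0, K (e 0), e 2, K (e 2)] = adaptedMinor (LinearMap.toMatrix e e K) := by
  set A := LinearMap.toMatrix e e K
  have hP : e.toMatrix ![e 0, K (e 0), e 2, K (e 2)] =
      !![1, A 0 0, 0, A 0 2; 0, A 1 0, 0, A 1 2; 0, A 2 0, 1, A 2 2; 0, A 3 0, 0, A 3 2] := by
    ext i j
    fin_cases i <;> fin_cases j <;> simp [toMatrix_apply, A, LinearMap.toMatrix_apply]
  rw [det_apply, hP, adaptedMinor]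
  simp [det_succ_row_zero, Fin.sum_univ_succ, Fin.succAbove]
  ring

end ComplexStructure

lemma LinearMap.apply_basis_of_orthogonal {ι R V : Type*} [Fintype ι] [CommSemiring R]
    [AddCommMonoid V] [Module R V] (g : V →ₗ[R] V →ₗ[R] R) (e : Basis ι R V)
    (horth : ∀ i j, i ≠ j → g (e i) (e j) = 0) (v : V) (j : ι) :
    g v (e j) = e.repr v j * g (e j) (e j) := by
  conv_lhs => rw [← e.sum_repr v]
  simp only [map_sum, map_smul, LinearMap.sum_apply, LinearMap.smul_apply, smul_eq_mul]
  exact Finset.sum_eq_single j (fun i _ hij => by rw [horth i j hij, mul_zero]) (by simp)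

def signature : Fin 4 → ℝ := ![1, 1, -1, -1]

/-- The matrices of `g`-skew endomorphisms in a basis with `g (e i) (e j) = δᵢⱼ signature i`. -/
def IsSignatureSkew (A : Matrix (Fin 4) (Fin 4) ℝ) : Prop :=
  ∀ i j, signature j * A j i = -(signature i * A i j)

def skewMatrix (p q r s t w : ℝ) : Matrix (Fin 4) (Fin 4) ℝ :=
  !![0, -p, q, r; p, 0, s, t; q, s, 0, -w; r, t, w, 0]

def selfDualMatrix (x : Fin 3 → ℝ) : Matrix (Fin 4) (Fin 4) ℝ :=
  !![0, -x 0, x 1, x 2; x 0, 0, x 2, -x 1; x 1, x 2, 0, -x 0; x 2, -x 1, x 0, 0]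

def antiSelfDualMatrix (x : Fin 3 → ℝ) : Matrix (Fin 4) (Fin 4) ℝ :=
  !![0, -x 0, x 1, x 2; x 0, 0, -x 2, x 1; x 1, -x 2, 0, x 0; x 2, x 1, -x 0, 0]

lemma IsSignatureSkew.eq_skewMatrix {A : Matrix (Fin 4) (Fin 4) ℝ} (hA : IsSignatureSkew A) :
    A = skewMatrix (A 1 0) (A 2 0) (A 3 0) (A 2 1) (A 3 1) (A 3 2) := by
  ext i j
  have hij := hA i j
  fin_cases i <;> fin_cases j <;> simp [signature, skewMatrix] at hij ⊢ <;> linarith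

lemma skewMatrix_eq_selfDual_or_antiSelfDual {p q r s t w : ℝ}
    (h : skewMatrix p q r s t w * skewMatrix p q r s t w = -1) :
    ∃ x : Fin 3 → ℝ, x 0 ^ 2 - x 1 ^ 2 - x 2 ^ 2 = 1 ∧
      (skewMatrix p q r s t w = selfDualMatrix x ∨
        skewMatrix p q r s t w = antiSelfDualMatrix x) := by
  have h' (i j : Fin 4) := congrFun₂ h i j
  simp [skewMatrix, mul_apply, Fin.sum_univ_four, Fin.forall_fin_succ] at h'
  -- twice the anti-self-dual and the self-dual coordinates of the matrix
  have hab : vecMulVec ![p - w, q + t, r - s] ![p + w, q - t, r + s] = 0 := by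
    ext i j
    fin_cases i <;> fin_cases j <;> simp <;> grind
  refine ⟨![p, q, r], by simp; grind, ?_⟩
  rcases vecMulVec_eq_zero.1 hab with ha | hb
  · obtain ⟨rfl, rfl, rfl⟩ : p = w ∧ q = -t ∧ r = s := by
      simpa [funext_iff, Fin.forall_fin_succ, sub_eq_zero, add_eq_zero_iff_eq_neg] using ha
    left
    ext i j
    fin_cases i <;> fin_cases j <;> simp [skewMatrix, selfDualMatrix]
  · obtain ⟨rfl, rfl, rfl⟩ : p = -w ∧ q = t ∧ r = -s := by
      simpa [funext_iff, Fin.forall_fin_succ, sub_eq_zero, add_eq_zero_iff_eq_neg] using hb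
    right
    ext i j
    fin_cases i <;> fin_cases j <;> simp [skewMatrix, antiSelfDualMatrix]

lemma IsSignatureSkew.selfDual_or_antiSelfDual {A : Matrix (Fin 4) (Fin 4) ℝ}
    (hA : IsSignatureSkew A) (hA2 : A * A = -1) :
    ∃ x : Fin 3 → ℝ, x 0 ^ 2 - x 1 ^ 2 - x 2 ^ 2 = 1 ∧
      (A = selfDualMatrix x ∨ A = antiSelfDualMatrix x) := by
  rw [hA.eq_skewMatrix] at hA2 ⊢
  exact skewMatrix_eq_selfDual_or_antiSelfDual hA2

lemma adaptedMinor_selfDualMatrix (x : Fin 3 → ℝ) :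
    adaptedMinor (selfDualMatrix x) = x 0 ^ 2 - x 2 ^ 2 := by
  simp [adaptedMinor, selfDualMatrix, sq]

lemma adaptedMinor_antiSelfDualMatrix (x : Fin 3 → ℝ) :
    adaptedMinor (antiSelfDualMatrix x) = -(x 0 ^ 2 - x 2 ^ 2) := by
  simp [adaptedMinor, antiSelfDualMatrix, sq, neg_add_eq_sub]

lemma IsSignatureSkew.adaptedMinor_ne_zero {A : Matrix (Fin 4) (Fin 4) ℝ}
    (hA : IsSignatureSkew A) (hA2 : A * A = -1) : adaptedMinor A ≠ 0 := by
  obtain ⟨x, hx, rfl | rfl⟩ := hA.selfDual_or_antiSelfDual hA2 <;>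
    simp only [adaptedMinor_selfDualMatrix, adaptedMinor_antiSelfDualMatrix] <;>
    nlinarith [sq_nonneg (x 1)]

lemma IsSignatureSkew.adaptedMinor_pos_iff {A : Matrix (Fin 4) (Fin 4) ℝ}
    (hA : IsSignatureSkew A) (hA2 : A * A = -1) :
    0 < adaptedMinor A ↔
      ∃ x : Fin 3 → ℝ, x 0 ^ 2 - x 1 ^ 2 - x 2 ^ 2 = 1 ∧ A = selfDualMatrix x := by
  constructor
  · obtain ⟨x, hx, rfl | rfl⟩ := hA.selfDual_or_antiSelfDual hA2
    · exact fun _ => ⟨x, hx, rfl⟩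
    · rw [adaptedMinor_antiSelfDualMatrix]
      intro h
      nlinarith [sq_nonneg (x 1)]
  · rintro ⟨x, hx, rfl⟩
    rw [adaptedMinor_selfDualMatrix]
    nlinarith [sq_nonneg (x 1)]

lemma toMatrix_combination_eq_selfDualMatrix {W : Type*} [AddCommGroup W] [Module ℝ W]
    (g : W →ₗ[ℝ] W →ₗ[ℝ] ℝ) (e : Basis (Fin 4) ℝ W)
    (hnorm : ∀ i : Fin 4, g (e i) (e i) = if (i : ℕ) < 2 then 1 else -1)
    (S : Fin 4 → Fin 4 → (W →ₗ[ℝ] W))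
    (hS : ∀ i j k : Fin 4, S i j (e k) = g (e k) (e k) •
      ((if i = k then (1 : ℝ) else 0) • e j - (if k = j then (1 : ℝ) else 0) • e i))
    (x : Fin 3 → ℝ) :
    LinearMap.toMatrix e e
      (x 0 • (S 0 1 - S 2 3) + x 1 • (S 0 2 - S 1 3) + x 2 • (S 0 3 + S 1 2)) =
      selfDualMatrix x := by
  ext i j
  rw [LinearMap.toMatrix_apply]
  fin_cases i <;> fin_cases j <;> simp [hS, hnorm, selfDualMatrix]

theorem stmt13 {W : Type*} [AddCommGroup W] [Module ℝ W]
    (g : W →ₗ[ℝ] W →ₗ[ℝ] ℝ) (hsymm : ∀ v w, g v w = g w v)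
    (e : Module.Basis (Fin 4) ℝ W)
    (horth : ∀ i j, i ≠ j → g (e i) (e j) = 0)
    (hnorm : ∀ i : Fin 4, g (e i) (e i) = if (i : ℕ) < 2 then 1 else -1)
    (S : Fin 4 → Fin 4 → (W →ₗ[ℝ] W))
    (hS : ∀ i j k : Fin 4, S i j (e k) = g (e k) (e k) •
      ((if i = k then (1 : ℝ) else 0) • e j - (if k = j then (1 : ℝ) else 0) • e i))
    (I1 I2 I3 : W →ₗ[ℝ] W)
    (hI1 : I1 = S 0 1 - S 2 3) (hI2 : I2 = S 0 2 - S 1 3) (hI3 : I3 = S 0 3 + S 1 2)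
    (K : W →ₗ[ℝ] W) (hK2 : K ∘ₗ K = -LinearMap.id)
    (hskew : ∀ v w, g (K v) w = - g v (K w)) :
    (∀ c : Module.Basis (Fin 4) ℝ W, c 1 = K (c 0) → c 3 = K (c 2) →
      c.orientation = e.orientation)
    ↔ ∃ x : Fin 3 → ℝ, x 0 ^ 2 - x 1 ^ 2 - x 2 ^ 2 = 1 ∧
        K = x 0 • I1 + x 1 • I2 + x 2 • I3 := by
  set A := LinearMap.toMatrix e e K
  have hA2 : A * A = -1 := by
    rw [← LinearMap.toMatrix_mul, Module.End.mul_eq_comp, hK2, map_neg, LinearMap.toMatrix_id]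
  have hsig (i : Fin 4) : g (e i) (e i) = signature i := by
    rw [hnorm]; fin_cases i <;> simp [signature]
  have hA : IsSignatureSkew A := fun i j => by
    have hij := hskew (e i) (e j)
    rw [hsymm (e i), LinearMap.apply_basis_of_orthogonal g e horth (K (e i)),
      LinearMap.apply_basis_of_orthogonal g e horth (K (e j)), hsig, hsig] at hij
    simpa [A, LinearMap.toMatrix_apply, mul_comm] using hij
  have hb : IsUnit (e.det ![e 0, K (e 0), e 2, K (e 2)]) := by
    rw [e.det_adapted, isUnit_iff_ne_zero]
    exact hA.adaptedMinor_ne_zero hA2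
  obtain ⟨hli, hspan⟩ := e.is_basis_iff_det.2 hb
  let b := Basis.mk hli hspan.ge
  rw [b.forall_adapted_orientation_eq_iff hK2 (by simp [b]) (by simp [b]), eq_comm,
    Basis.orientation_eq_iff_det_pos, Basis.coe_mk, e.det_adapted, hA.adaptedMinor_pos_iff hA2]
  subst hI1 hI2 hI3
  simp_rw [← toMatrix_combination_eq_selfDualMatrix g e hnorm S hS, A,
    (LinearMap.toMatrix e e).injective.eq_iff]
end

section
/- Let V be a 2-dimensional real vector space and J a generalized complex structure on V inducing the canonical orientation of V ⊕ V*. Let {Q_1, Q_2 = JQ_1, Q_3, Q_4 = JQ_3} be an orthonormal basis of V ⊕ V* (with ‖Q_1‖² = ‖Q_2‖² = 1, ‖Q_3‖² = ‖Q_4‖² = −1), and write e_i = π_1(Q_i) for the V-components. Then there exists t ∈ ℝ such that e_3 = cos(t)·e_1 + sin(t)·e_2 and e_4 = −sin(t)·e_1 + cos(t)·e_2. -/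
/-!
Since `V*` is isotropic, `π₁` is injective on the positive definite plane spanned by `Q 0`, `Q 1`,
so `(Q 0).1, (Q 1).1` is a basis of `V` and `(Q 2).1 = p (Q 0).1 + q (Q 1).1`,
`(Q 3).1 = r (Q 0).1 + s (Q 1).1`. The defects `Q 2 - p Q 0 - q Q 1` and `Q 3 - r Q 0 - s Q 1`
lie in `V*`; pairing them with the frame shows that `[[p, q], [r, s]]` is orthogonal. Column
operations turn the orientation determinant of `Q` into that of `Q 0, Q 1` and the two defects,
which is block triangular and equals `4 (p s - q r)`, so the orientation excludes a reflection.
-/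

open Module Submodule

theorem AlternatingMap.map_update_add_of_mem_span {R M N ι : Type*} [Semiring R]
    [AddCommMonoid M] [Module R M] [AddCommMonoid N] [Module R N] [DecidableEq ι]
    (f : M [⋀^ι]→ₗ[R] N) (v : ι → M) (i : ι) (x : M) {w : M} (hw : w ∈ span R (v '' {i}ᶜ)) :
    f (Function.update v i (x + w)) = f (Function.update v i x) := by
  have hw0 : w ∈ LinearMap.ker (f.toMultilinearMap.toLinearMap v i) := by
    refine span_le.mpr ?_ hw
    rintro _ ⟨j, hj, rfl⟩
    exact f.map_update_self v (Ne.symm hj)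
  rw [f.map_update_add, show f (Function.update v i w) = 0 from LinearMap.mem_ker.mp hw0,
    add_zero]

theorem AlternatingMap.map_vec4_add_smul_add_smul {R M N : Type*} [Semiring R]
    [AddCommMonoid M] [Module R M] [AddCommMonoid N] [Module R N]
    (f : M [⋀^Fin 4]→ₗ[R] N) (a b c d : M) (p q r s : R) :
    f ![a, b, c + (p • a + q • b), d + (r • a + s • b)] = f ![a, b, c, d] := by
  have hspan : ∀ (v : Fin 4 → M) (i : Fin 4) (x y : R), v 0 = a → v 1 = b → i ≠ 0 → i ≠ 1 →
      x • a + y • b ∈ span R (v '' {i}ᶜ) := fun v i x y h0 h1 hi0 hi1 ↦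
    add_mem (smul_mem _ _ (subset_span ⟨0, hi0.symm, h0⟩))
      (smul_mem _ _ (subset_span ⟨1, hi1.symm, h1⟩))
  calc f ![a, b, c + (p • a + q • b), d + (r • a + s • b)]
      = f (Function.update ![a, b, c + (p • a + q • b), d] 3 (d + (r • a + s • b))) := by
        congr 1; ext i; fin_cases i <;> rfl
    _ = f (Function.update ![a, b, c, d] 2 (c + (p • a + q • b))) := by
        rw [f.map_update_add_of_mem_span _ _ _ (hspan _ _ _ _ rfl rfl (by decide) (by decide))]
        congr 1; ext i; fin_cases i <;> rfl
    _ = f ![a, b, c, d] := by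
        rw [f.map_update_add_of_mem_span _ _ _ (hspan _ _ _ _ rfl rfl (by decide) (by decide))]
        congr 1; ext i; fin_cases i <;> rfl

theorem Module.Basis.det_prod_dualBasis_sumElim {R V ι : Type*} [CommRing R] [AddCommGroup V]
    [Module R V] [Fintype ι] [DecidableEq ι] (e : Basis ι R V) (y : ι → V × Dual R V)
    (ζ : ι → Dual R V) :
    (e.prod e.dualBasis).det (Sum.elim y fun i ↦ (0, ζ i)) =
      (Matrix.of fun i j ↦ ζ i (y j).1).det := by
  let X : Matrix ι ι R := Matrix.of fun i j ↦ e.repr (y j).1 i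
  let Z : Matrix ι ι R := Matrix.of fun i j ↦ ζ j (e i)
  have hblocks : (e.prod e.dualBasis).toMatrix (Sum.elim y fun i ↦ (0, ζ i)) =
      Matrix.fromBlocks X 0 (Matrix.of fun i j ↦ (y j).2 (e i)) Z := by
    ext (i | i) (j | j) <;> simp [Basis.toMatrix_apply, X, Z]
  have hpair : Z.transpose * X = Matrix.of fun i j ↦ ζ i (y j).1 := by
    ext i j
    conv_rhs => rw [Matrix.of_apply, ← e.sum_repr (y j).1]
    simp only [Matrix.mul_apply, Matrix.transpose_apply, Matrix.of_apply, map_sum, map_smul,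
      smul_eq_mul, X, Z, mul_comm]
  rw [Basis.det_apply, hblocks, Matrix.det_fromBlocks_zero₁₂, ← hpair, Matrix.det_mul,
    Matrix.det_transpose, mul_comm]

theorem LinearIndependent.exists_eq_smul_add_smul {K V : Type*} [Field K] [AddCommGroup V]
    [Module K V] (hV : finrank K V = 2) {x y : V} (hxy : LinearIndependent K ![x, y]) (z : V) :
    ∃ a b : K, z = a • x + b • y := by
  let b := basisOfLinearIndependentOfCardEqFinrank hxy (by simp [hV])
  refine ⟨b.repr z 0, b.repr z 1, ?_⟩
  simpa [b, Fin.sum_univ_two] using (b.sum_repr z).symm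

theorem Real.exists_cos_eq_and_sin_eq {x y : ℝ} (h : x ^ 2 + y ^ 2 = 1) :
    ∃ t, Real.cos t = x ∧ Real.sin t = y := by
  have hnorm : ‖(⟨x, y⟩ : ℂ)‖ = 1 := by
    rw [Complex.norm_def, Complex.normSq_mk, ← Real.sqrt_one]
    congr 1; linear_combination h
  have hz : (⟨x, y⟩ : ℂ) ≠ 0 := fun h0 ↦ by simp [h0] at hnorm
  exact ⟨Complex.arg ⟨x, y⟩, by simp [Complex.cos_arg hz, hnorm],
    by simp [Complex.sin_arg, hnorm]⟩

theorem exists_rotation_of_orthonormal {p q r s : ℝ} (hpq : p ^ 2 + q ^ 2 = 1)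
    (hrs : r ^ 2 + s ^ 2 = 1) (horth : p * r + q * s = 0) (hdet : 0 < p * s - q * r) :
    ∃ t, Real.cos t = p ∧ Real.sin t = q ∧ r = -Real.sin t ∧ s = Real.cos t := by
  have hdet1 : p * s - q * r = 1 := by
    have hsq : (p * s - q * r) ^ 2 = 1 := by
      linear_combination (r ^ 2 + s ^ 2) * hpq + hrs - (p * r + q * s) * horth
    nlinarith
  have hr : r = -q := by nlinarith [sq_nonneg (r + q), sq_nonneg (s - p)]
  have hs : s = p := by nlinarith [sq_nonneg (r + q), sq_nonneg (s - p)]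
  obtain ⟨t, hc, hs'⟩ := Real.exists_cos_eq_and_sin_eq hpq
  exact ⟨t, hc, hs', by rw [hr, hs'], by rw [hs, hc]⟩

section NeutralForm

variable {V : Type*} [AddCommGroup V] [Module ℝ V]

theorem neutralForm_sub_left (p p' q : V × Dual ℝ V) :
    neutralForm (p - p') q = neutralForm p q - neutralForm p' q := by
  simp only [neutralForm, Prod.fst_sub, Prod.snd_sub, map_sub, LinearMap.sub_apply]; ring

theorem neutralForm_add_left (p p' q : V × Dual ℝ V) :
    neutralForm (p + p') q = neutralForm p q + neutralForm p' q := by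
  simp only [neutralForm, Prod.fst_add, Prod.snd_add, map_add, LinearMap.add_apply]; ring

theorem neutralForm_smul_left (a : ℝ) (p q : V × Dual ℝ V) :
    neutralForm (a • p) q = a * neutralForm p q := by
  simp only [neutralForm, Prod.smul_fst, Prod.smul_snd, map_smul, LinearMap.smul_apply,
    smul_eq_mul]; ring

theorem neutralForm_comm (p q : V × Dual ℝ V) : neutralForm p q = neutralForm q p := by
  simp only [neutralForm]; ring

theorem snd_apply_fst_eq_two_mul_neutralForm {P : V × Dual ℝ V} (hP : P.1 = 0)
    (z : V × Dual ℝ V) : P.2 z.1 = 2 * neutralForm P z := by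
  simp only [neutralForm, hP, map_zero, add_zero]; ring

theorem linearIndependent_fst_of_neutralForm {u v : V × Dual ℝ V} (hu : neutralForm u u = 1)
    (hv : neutralForm v v = 1) (huv : neutralForm u v = 0) :
    LinearIndependent ℝ ![u.1, v.1] := by
  rw [LinearIndependent.pair_iff]
  intro a b hab
  set P := a • u + b • v
  have hP : P.1 = 0 := by simpa [P] using hab
  have hPu : P.2 u.1 = 2 * a := by
    rw [snd_apply_fst_eq_two_mul_neutralForm hP, neutralForm_add_left, neutralForm_smul_left,
      neutralForm_smul_left, hu, neutralForm_comm, huv]; ring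
  have hPv : P.2 v.1 = 2 * b := by
    rw [snd_apply_fst_eq_two_mul_neutralForm hP, neutralForm_add_left, neutralForm_smul_left,
      neutralForm_smul_left, hv, huv]; ring
  have hPP : P.2 P.1 = 2 * a * a + 2 * b * b := by
    rw [show P.1 = a • u.1 + b • v.1 from rfl, map_add, map_smul, map_smul, hPu, hPv,
      smul_eq_mul, smul_eq_mul]; ring
  rw [hP, map_zero] at hPP
  exact mul_self_add_mul_self_eq_zero.mp (by linarith)

theorem snd_sub_smul_sub_smul_apply {u v w : V × Dual ℝ V} {a b : ℝ}
    (hw : w.1 = a • u.1 + b • v.1) (z : V × Dual ℝ V) :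
    (w - a • u - b • v).2 z.1 =
      2 * (neutralForm w z - a * neutralForm u z - b * neutralForm v z) := by
  rw [snd_apply_fst_eq_two_mul_neutralForm (by simp [hw]), neutralForm_sub_left,
    neutralForm_sub_left, neutralForm_smul_left, neutralForm_smul_left]

end NeutralForm

section Frame

variable {V : Type*} [AddCommGroup V] [Module ℝ V] {Q : Fin 4 → V × Dual ℝ V}
  (horth : ∀ i j, i ≠ j → neutralForm (Q i) (Q j) = 0)
  (hnorm : ∀ i : Fin 4, neutralForm (Q i) (Q i) = if (i : ℕ) < 2 then 1 else -1)
include horth hnorm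

theorem neutralForm_frame (i j : Fin 4) :
    neutralForm (Q i) (Q j) = if i = j then if (i : ℕ) < 2 then 1 else -1 else 0 := by
  by_cases hij : i = j
  · subst hij; rw [if_pos rfl]; exact hnorm i
  · rw [if_neg hij]; exact horth i j hij

theorem orthogonal_coeffs_of_frame {p q r s : ℝ} (h2 : (Q 2).1 = p • (Q 0).1 + q • (Q 1).1)
    (h3 : (Q 3).1 = r • (Q 0).1 + s • (Q 1).1) :
    p ^ 2 + q ^ 2 = 1 ∧ r ^ 2 + s ^ 2 = 1 ∧ p * r + q * s = 0 := by
  have hζ := fun j ↦ snd_sub_smul_sub_smul_apply h2 (Q j)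
  have hζ' := fun j ↦ snd_sub_smul_sub_smul_apply h3 (Q j)
  simp only [neutralForm_frame horth hnorm] at hζ hζ'
  have h22 := hζ 2; have h23 := hζ 3; have h33 := hζ' 3
  rw [h2] at h22; rw [h3] at h23 h33
  simp only [map_add, map_smul, smul_eq_mul, hζ, hζ'] at h22 h23 h33
  norm_num [Fin.ext_iff] at h22 h23 h33
  refine ⟨by linear_combination -h22 / 2, by linear_combination -h33 / 2,
    by linear_combination -h23 / 2⟩

theorem det_prod_dualBasis_frame (e : Basis (Fin 2) ℝ V) {p q r s : ℝ}
    (h2 : (Q 2).1 = p • (Q 0).1 + q • (Q 1).1) (h3 : (Q 3).1 = r • (Q 0).1 + s • (Q 1).1) :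
    ((e.prod e.dualBasis).reindex finSumFinEquiv).det Q = 4 * (p * s - q * r) := by
  have hζ := fun j ↦ snd_sub_smul_sub_smul_apply h2 (Q j)
  have hζ' := fun j ↦ snd_sub_smul_sub_smul_apply h3 (Q j)
  simp only [neutralForm_frame horth hnorm] at hζ hζ'
  set P := Q 2 - p • Q 0 - q • Q 1
  set P' := Q 3 - r • Q 0 - s • Q 1
  have hQ :
      Q = ![Q 0, Q 1, (0, P.2) + (p • Q 0 + q • Q 1), (0, P'.2) + (r • Q 0 + s • Q 1)] := by
    have hP : P = (0, P.2) := Prod.ext (by simp [P, h2]) rfl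
    have hP' : P' = (0, P'.2) := Prod.ext (by simp [P', h3]) rfl
    rw [← hP, ← hP']
    ext1 i; fin_cases i <;> simp [P, P']
  have hsum : ![Q 0, Q 1, (0, P.2), (0, P'.2)] ∘ finSumFinEquiv =
      Sum.elim ![Q 0, Q 1] fun i ↦ (0, ![P.2, P'.2] i) := by
    ext1 (i | i) <;> fin_cases i <;> rfl
  rw [hQ, AlternatingMap.map_vec4_add_smul_add_smul, Basis.det_reindex, hsum,
    Basis.det_prod_dualBasis_sumElim, Matrix.det_fin_two]
  simp only [Matrix.of_apply, Matrix.cons_val_zero, Matrix.cons_val_one, hζ, hζ']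
  norm_num [Fin.ext_iff]
  ring

end Frame

theorem stmt16_general {V : Type*} [AddCommGroup V] [Module ℝ V]
    (hdim : Module.finrank ℝ V = 2)
    (Q : Fin 4 → V × Module.Dual ℝ V)
    (horth : ∀ i j, i ≠ j → neutralForm (Q i) (Q j) = 0)
    (hnorm : ∀ i : Fin 4, neutralForm (Q i) (Q i) = if (i : ℕ) < 2 then 1 else -1)
    (eV : Module.Basis (Fin 2) ℝ V)
    (c : Module.Basis (Fin 4) ℝ (V × Module.Dual ℝ V)) (hc : ⇑c = Q)
    (hcanon : c.orientation =
      ((eV.prod eV.dualBasis).reindex finSumFinEquiv).orientation) :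
    ∃ t : ℝ,
      (Q 2).1 = Real.cos t • (Q 0).1 + Real.sin t • (Q 1).1 ∧
      (Q 3).1 = -Real.sin t • (Q 0).1 + Real.cos t • (Q 1).1 := by
  have hindep : LinearIndependent ℝ ![(Q 0).1, (Q 1).1] :=
    linearIndependent_fst_of_neutralForm (by simpa using hnorm 0) (by simpa using hnorm 1)
      (horth 0 1 (by decide))
  obtain ⟨p, q, h2⟩ := hindep.exists_eq_smul_add_smul hdim (Q 2).1
  obtain ⟨r, s, h3⟩ := hindep.exists_eq_smul_add_smul hdim (Q 3).1
  obtain ⟨hpq, hrs, hpr⟩ := orthogonal_coeffs_of_frame horth hnorm h2 h3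
  have hdet : 0 < 4 * (p * s - q * r) := by
    rw [← det_prod_dualBasis_frame horth hnorm eV h2 h3, ← hc]
    exact (Basis.orientation_eq_iff_det_pos _ _).mp hcanon.symm
  obtain ⟨t, hp, hq, hr, hs⟩ := exists_rotation_of_orthonormal hpq hrs hpr (by linarith)
  exact ⟨t, by rw [h2, hp, hq], by rw [h3, hr, hs]⟩

theorem stmt16 {V : Type*} [AddCommGroup V] [Module ℝ V] [FiniteDimensional ℝ V]
    (hdim : Module.finrank ℝ V = 2)
    (J : (V × Module.Dual ℝ V) →ₗ[ℝ] (V × Module.Dual ℝ V))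
    (hJ2 : J ∘ₗ J = -LinearMap.id)
    (hJskew : ∀ p q, neutralForm (J p) q = - neutralForm p (J q))
    (Q : Fin 4 → V × Module.Dual ℝ V)
    (horth : ∀ i j, i ≠ j → neutralForm (Q i) (Q j) = 0)
    (hnorm : ∀ i : Fin 4, neutralForm (Q i) (Q i) = if (i : ℕ) < 2 then 1 else -1)
    (hQ1 : Q 1 = J (Q 0)) (hQ3 : Q 3 = J (Q 2))
    (eV : Module.Basis (Fin 2) ℝ V)
    (c : Module.Basis (Fin 4) ℝ (V × Module.Dual ℝ V)) (hc : ⇑c = Q)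
    (hcanon : c.orientation =
      ((eV.prod eV.dualBasis).reindex finSumFinEquiv).orientation) :
    ∃ t : ℝ,
      (Q 2).1 = Real.cos t • (Q 0).1 + Real.sin t • (Q 1).1 ∧
      (Q 3).1 = -Real.sin t • (Q 0).1 + Real.cos t • (Q 1).1 :=
  stmt16_general hdim Q horth hnorm eV c hc hcanon
end

section
/- Let V be a real vector space of dimension 2n with n ≥ 2, and let μ : V × V → ℝ be a bilinear form. Define R(X,Y) ∈ End(V) by R(X,Y)Z = μ(X,Y)Z − μ(Y,X)Z + μ(X,Z)Y − μ(Y,Z)X, and extend R(X,Y) to an endomorphism of V ⊕ V* by setting (R(X,Y)ξ)(Z) = −ξ(R(X,Y)Z) for ξ ∈ V*. Suppose that for every basis {E_1,...,E_{2n}} of V with dual basis {η_1,...,η_{2n}}, the generalized complex structure J on V defined by J E_{2k−1} = η_{2k}, J E_{2k} = −η_{2k−1} (k = 1,...,n) commutes with R(X,Y) on V ⊕ V* for all X, Y ∈ V. Then μ = 0, and consequently R(X,Y) = 0 for all X, Y ∈ V. -/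
/-!
Let `E` be a basis and `ω` the symplectic form for which `E` is a Darboux basis, i.e. the
`V → V*` block of the generalized complex structure `J` attached to `E`. Comparing the `V*`
components of `J (R Z, 0)` and `R (J (Z, 0))` shows that `J` commutes with `R(X, Y)` exactly when
`R(X, Y)` is `ω`-skew-adjoint. Expanding this for `X = E₀`, `Y = E₂` and suitable `Z`, `W` among
`E₀, …, E₃` gives `μ(E₀, E₀) = 0` and the linear system `3 μ(E₀, E₂) = 2 μ(E₂, E₀)`,
`3 μ(E₂, E₀) = 2 μ(E₀, E₂)`, whence `μ(E₀, E₂) = 0`. Since the hypothesis holds for every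
basis, reordering a fixed basis makes `μ` vanish on all pairs of basis vectors.
-/

open Module LinearMap

section Darboux

variable {V : Type*} [AddCommGroup V] [Module ℝ V] {n : ℕ}

/-- `ω(E₂ₖ, E₂ₖ₊₁) = 1 = -ω(E₂ₖ₊₁, E₂ₖ)`, all other pairings zero; indices are 0-based, so
`(E₂ₖ, E₂ₖ₊₁)` is the paper's `(E_{2k-1}, E_{2k})`. -/
noncomputable def darbouxForm (E : Basis (Fin (2 * n)) ℝ V) : V →ₗ[ℝ] Dual ℝ V :=
  E.constr ℝ fun i =>
    if h : (i : ℕ) % 2 = 0 then E.dualBasis ⟨i + 1, by omega⟩ else -E.dualBasis ⟨i - 1, by omega⟩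

noncomputable def darbouxDual (E : Basis (Fin (2 * n)) ℝ V) : Dual ℝ V →ₗ[ℝ] V :=
  E.dualBasis.constr ℝ fun i =>
    if h : (i : ℕ) % 2 = 0 then E ⟨i + 1, by omega⟩ else -E ⟨i - 1, by omega⟩

noncomputable def darbouxComplexStructure (E : Basis (Fin (2 * n)) ℝ V) :
    V × Dual ℝ V →ₗ[ℝ] V × Dual ℝ V :=
  (darbouxDual E ∘ₗ snd ℝ V _).prod (darbouxForm E ∘ₗ fst ℝ V _)

theorem darbouxComplexStructure_apply (E : Basis (Fin (2 * n)) ℝ V) (v : V) (ξ : Dual ℝ V) :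
    darbouxComplexStructure E (v, ξ) = (darbouxDual E ξ, darbouxForm E v) := rfl

theorem darbouxForm_basis (E : Basis (Fin (2 * n)) ℝ V) (i : Fin (2 * n)) :
    darbouxForm E (E i) =
      if h : (i : ℕ) % 2 = 0 then E.dualBasis ⟨i + 1, by omega⟩
      else -E.dualBasis ⟨i - 1, by omega⟩ :=
  E.constr_basis ℝ _ i

theorem darbouxDual_dualBasis (E : Basis (Fin (2 * n)) ℝ V) (i : Fin (2 * n)) :
    darbouxDual E (E.dualBasis i) =
      if h : (i : ℕ) % 2 = 0 then E ⟨i + 1, by omega⟩ else -E ⟨i - 1, by omega⟩ :=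
  E.dualBasis.constr_basis ℝ _ i

theorem darbouxForm_basis_basis (E : Basis (Fin (2 * n)) ℝ V) (i j : Fin (2 * n)) :
    darbouxForm E (E i) (E j) =
      if (i : ℕ) % 2 = 0 then (if (j : ℕ) = i + 1 then 1 else 0)
      else (if (j : ℕ) + 1 = i then -1 else 0) := by
  rw [darbouxForm_basis]
  split_ifs <;> simp only [LinearMap.neg_apply, Basis.dualBasis_apply_self, Fin.ext_iff] <;>
    split_ifs <;> first | omega | norm_num

theorem darbouxComplexStructure_spec (E : Basis (Fin (2 * n)) ℝ V) (k : Fin n) :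
    darbouxComplexStructure E (E ⟨2 * (k : ℕ), by omega⟩, 0) =
        (0, E.dualBasis ⟨2 * (k : ℕ) + 1, by omega⟩) ∧
      darbouxComplexStructure E (E ⟨2 * (k : ℕ) + 1, by omega⟩, 0) =
        (0, -E.dualBasis ⟨2 * (k : ℕ), by omega⟩) ∧
      darbouxComplexStructure E (0, E.dualBasis ⟨2 * (k : ℕ) + 1, by omega⟩) =
        (-E ⟨2 * (k : ℕ), by omega⟩, 0) ∧
      darbouxComplexStructure E (0, E.dualBasis ⟨2 * (k : ℕ), by omega⟩) =
        (E ⟨2 * (k : ℕ) + 1, by omega⟩, 0) := by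
  have heven : 2 * (k : ℕ) % 2 = 0 := by omega
  have hodd : (2 * (k : ℕ) + 1) % 2 ≠ 0 := by omega
  simp only [darbouxComplexStructure_apply, map_zero, darbouxForm_basis, darbouxDual_dualBasis,
    dif_pos heven, dif_neg hodd, Nat.add_sub_cancel, and_self]

end Darboux

section SkewAdjoint

variable {V : Type*} [AddCommGroup V] [Module ℝ V]

theorem isSkewAdjoint_of_comp_prodMap_comm (φ : V →ₗ[ℝ] Dual ℝ V) (ψ : Dual ℝ V →ₗ[ℝ] V)
    (T : V →ₗ[ℝ] V)
    (hT : (ψ ∘ₗ snd ℝ V _).prod (φ ∘ₗ fst ℝ V _) ∘ₗ T.prodMap (-T.dualMap) =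
      T.prodMap (-T.dualMap) ∘ₗ (ψ ∘ₗ snd ℝ V _).prod (φ ∘ₗ fst ℝ V _)) :
    φ.IsSkewAdjoint T := by
  intro Z W
  have h := congr_arg (fun F => (F (Z, 0)).2 W) hT
  simpa [dualMap_apply] using h

variable (μ : V →ₗ[ℝ] V →ₗ[ℝ] ℝ) (R : V → V → V →ₗ[ℝ] V)

theorem isSkewAdjoint_curvature_expand
    (hR : ∀ X Y Z : V, R X Y Z = μ X Y • Z - μ Y X • Z + μ X Z • Y - μ Y Z • X)
    (ω : V →ₗ[ℝ] V →ₗ[ℝ] ℝ) {X Y : V} (h : ω.IsSkewAdjoint (R X Y)) (Z W : V) :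
    2 * (μ X Y - μ Y X) * ω Z W + μ X Z * ω Y W - μ Y Z * ω X W + μ X W * ω Z Y
      - μ Y W * ω Z X = 0 := by
  have h := h Z W
  simp only [Pi.neg_apply, hR, map_add, map_sub, map_smul, map_neg, LinearMap.add_apply,
    LinearMap.sub_apply, LinearMap.smul_apply, smul_eq_mul] at h
  linarith

theorem apply_basis_eq_zero_of_isSkewAdjoint_darbouxForm {n : ℕ} (hn : 2 ≤ n)
    (hR : ∀ X Y Z : V, R X Y Z = μ X Y • Z - μ Y X • Z + μ X Z • Y - μ Y Z • X)
    (E : Basis (Fin (2 * n)) ℝ V)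
    (h : (darbouxForm E).IsSkewAdjoint (R (E ⟨0, by omega⟩) (E ⟨2, by omega⟩))) :
    μ (E ⟨0, by omega⟩) (E ⟨0, by omega⟩) = 0 ∧ μ (E ⟨0, by omega⟩) (E ⟨2, by omega⟩) = 0 := by
  have expand := isSkewAdjoint_curvature_expand μ R hR _ h
  have hA := expand (E ⟨0, by omega⟩) (E ⟨3, by omega⟩)
  have hB := expand (E ⟨2, by omega⟩) (E ⟨3, by omega⟩)
  have hC := expand (E ⟨1, by omega⟩) (E ⟨0, by omega⟩)
  simp only [darbouxForm_basis_basis] at hA hB hC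
  norm_num at hA hB hC
  exact ⟨hA, by linarith⟩

end SkewAdjoint

theorem LinearMap.eq_zero_of_forall_perm_basis {A M ι : Type*} [CommSemiring A]
    [AddCommMonoid M] [Module A M] (μ : M →ₗ[A] M →ₗ[A] A) (b : Basis ι A M) {i₀ i₁ : ι}
    (hne : i₀ ≠ i₁)
    (h : ∀ σ : Equiv.Perm ι, μ (b (σ i₀)) (b (σ i₀)) = 0 ∧ μ (b (σ i₀)) (b (σ i₁)) = 0) :
    μ = 0 := by
  refine b.ext fun i => b.ext fun j => ?_
  rcases eq_or_ne i j with rfl | hij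
  · obtain ⟨σ, hσ⟩ := Equiv.Perm.exists_extending_pair ![i₀] ![i]
      (Function.injective_of_subsingleton _) (Function.injective_of_subsingleton _)
    have hσ₀ : σ i₀ = i := hσ 0
    simpa [hσ₀] using (h σ).1
  · obtain ⟨σ, hσ⟩ := Equiv.Perm.exists_extending_pair ![i₀, i₁] ![i, j]
      (injective_pair_iff_ne.mpr hne) (injective_pair_iff_ne.mpr hij)
    have hσ₀ : σ i₀ = i := hσ 0
    have hσ₁ : σ i₁ = j := hσ 1
    simpa [hσ₀, hσ₁] using (h σ).2

theorem stmt17 {V : Type*} [AddCommGroup V] [Module ℝ V] [FiniteDimensional ℝ V]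
    (n : ℕ) (hn : 2 ≤ n) (hdim : Module.finrank ℝ V = 2 * n)
    (μ : V →ₗ[ℝ] V →ₗ[ℝ] ℝ)
    (R : V → V → (V →ₗ[ℝ] V))
    (hR : ∀ X Y Z : V,
      R X Y Z = μ X Y • Z - μ Y X • Z + μ X Z • Y - μ Y Z • X)
    (Rext : V → V → ((V × Module.Dual ℝ V) →ₗ[ℝ] (V × Module.Dual ℝ V)))
    (hRext : ∀ X Y : V, Rext X Y = (R X Y).prodMap (-(R X Y).dualMap))
    (hcomm : ∀ (E : Module.Basis (Fin (2 * n)) ℝ V)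
      (J : (V × Module.Dual ℝ V) →ₗ[ℝ] (V × Module.Dual ℝ V)),
      (∀ k : Fin n,
        J (E ⟨2 * (k : ℕ), by have := k.isLt; omega⟩, 0) =
          (0, E.dualBasis ⟨2 * (k : ℕ) + 1, by have := k.isLt; omega⟩) ∧
        J (E ⟨2 * (k : ℕ) + 1, by have := k.isLt; omega⟩, 0) =
          (0, -E.dualBasis ⟨2 * (k : ℕ), by have := k.isLt; omega⟩) ∧
        J (0, E.dualBasis ⟨2 * (k : ℕ) + 1, by have := k.isLt; omega⟩) =
          (-E ⟨2 * (k : ℕ), by have := k.isLt; omega⟩, 0) ∧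
        J (0, E.dualBasis ⟨2 * (k : ℕ), by have := k.isLt; omega⟩) =
          (E ⟨2 * (k : ℕ) + 1, by have := k.isLt; omega⟩, 0)) →
      ∀ X Y : V, J ∘ₗ Rext X Y = Rext X Y ∘ₗ J) :
    μ = 0 ∧ ∀ X Y : V, R X Y = 0 := by
  have hskew (E : Basis (Fin (2 * n)) ℝ V) (X Y : V) : (darbouxForm E).IsSkewAdjoint (R X Y) :=
    isSkewAdjoint_of_comp_prodMap_comm _ _ _ <| by
      rw [← hRext]
      exact hcomm E _ (darbouxComplexStructure_spec E) X Y
  have hμ : μ = 0 := by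
    refine μ.eq_zero_of_forall_perm_basis (finBasisOfFinrankEq ℝ V hdim)
      (i₀ := ⟨0, by omega⟩) (i₁ := ⟨2, by omega⟩) (by simp) fun σ => ?_
    simpa using apply_basis_eq_zero_of_isSkewAdjoint_darbouxForm μ R hn hR
      ((finBasisOfFinrankEq ℝ V hdim).reindex σ.symm) (hskew _ _ _)
  exact ⟨hμ, fun X Y => LinearMap.ext fun Z => by simp [hR, hμ]⟩
end
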